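/- arXiv:1605.05953 — 8 statements merged into one kernel-verified Lean document; each statement's English description precedes it below -/
import Mathlib

section
/- Let A be a finite-dimensional local symmetric F-algebra. Then soc(A) ∩ [A,A] = 0, where [A,A] is the F-span of all commutators ab − ba. -/
open Module

noncomputable def jrad (F A : Type*) [Field F] [Ring A] [Algebra F A] : Submodule F A :=
  Submodule.restrictScalars F (Ideal.jacobson (⊥ : Ideal A))

noncomputable def socl (F A : Type*) [Field F] [Ring A] [Algebra F A] : Submodule F A where
  carrier := {a | ∀ b ∈ Ideal.jacobson (⊥ : Ideal A), a * b = 0}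
  add_mem' := by
    intro a b ha hb c hc
    rw [add_mul, ha c hc, hb c hc, add_zero]
  zero_mem' := by intro c hc; exact zero_mul c
  smul_mem' := by
    intro r a ha c hc
    rw [Algebra.smul_def, mul_assoc, ha c hc, mul_zero]

noncomputable def commSpan (F A : Type*) [Field F] [Ring A] [Algebra F A] : Submodule F A :=
  Submodule.span F {x : A | ∃ a b : A, x = a * b - b * a}

/-!
Commutators are killed by the symmetrizing form `s`. On the other hand, in a local algebra every
`b` is a scalar `c` modulo the radical, so a socle element `x` satisfies `x * b = c • x`; hence if
also `s x = 0`, the form vanishes on the whole left ideal `A x`, which therefore is zero.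
-/

section

variable {F A : Type*} [Field F] [Ring A] [Algebra F A]

theorem commSpan_le_ker {M : Type*} [AddCommGroup M] [Module F M] (s : A →ₗ[F] M)
    (hs : ∀ a b : A, s (a * b) = s (b * a)) : commSpan F A ≤ LinearMap.ker s :=
  Submodule.span_le.2 <| by
    rintro _ ⟨a, b, rfl⟩
    simp [hs a b]

theorem mul_eq_smul_of_mem_socl {x b : A} (hx : x ∈ socl F A) {c : F}
    (hc : b - algebraMap F A c ∈ Ideal.jacobson (⊥ : Ideal A)) : x * b = c • x := by
  have hxb : x * (b - algebraMap F A c) = 0 := hx _ hc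
  rw [mul_sub, sub_eq_zero] at hxb
  rw [hxb, Algebra.smul_def, Algebra.commutes]

theorem span_singleton_le_ker_of_mem_socl
    (hloc : ∀ a : A, ∃ c : F, a - algebraMap F A c ∈ Ideal.jacobson (⊥ : Ideal A))
    (s : A →ₗ[F] F) (hs : ∀ a b : A, s (a * b) = s (b * a))
    {x : A} (hx : x ∈ socl F A) (hsx : s x = 0) :
    ((Ideal.span {x} : Ideal A) : Set A) ⊆ {y | s y = 0} := by
  intro y hy
  obtain ⟨b, rfl⟩ := Ideal.mem_span_singleton'.1 hy
  obtain ⟨c, hc⟩ := hloc b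
  show s (b * x) = 0
  rw [hs, mul_eq_smul_of_mem_socl hx hc, map_smul, hsx, smul_zero]

end

theorem socle_inf_commutators_eq_bot_general
    (F A : Type*) [Field F] [Ring A] [Algebra F A]
    (hloc : ∀ a : A, ∃ c : F, a - algebraMap F A c ∈ Ideal.jacobson (⊥ : Ideal A))
    (s : A →ₗ[F] F) (hs : ∀ a b : A, s (a * b) = s (b * a))
    (hker : ∀ I : Ideal A, (I : Set A) ⊆ {x | s x = 0} → I = ⊥) :
    socl F A ⊓ commSpan F A = ⊥ := by
  refine eq_bot_iff.2 fun x ⟨hx_socl, hx_comm⟩ => ?_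
  have hsx : s x = 0 := commSpan_le_ker s hs hx_comm
  have hspan : Ideal.span {x} = ⊥ :=
    hker _ (span_singleton_le_ker_of_mem_socl hloc s hs hx_socl hsx)
  simpa [Ideal.span_singleton_eq_bot] using hspan

/-- Let A be a finite-dimensional local symmetric F-algebra.
Then soc(A) ∩ [A,A] = 0. -/
theorem socle_inf_commutators_eq_bot
    (F A : Type*) [Field F] [Ring A] [Algebra F A] [FiniteDimensional F A]
    (hloc : ∀ a : A, ∃ c : F, a - algebraMap F A c ∈ Ideal.jacobson (⊥ : Ideal A))
    (s : A →ₗ[F] F) (hs : ∀ a b : A, s (a * b) = s (b * a))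
    (hker : ∀ I : Ideal A, (I : Set A) ⊆ {x | s x = 0} → I = ⊥) :
    socl F A ⊓ commSpan F A = ⊥ :=
  socle_inf_commutators_eq_bot_general F A hloc s hs hker
end

section
/- Let A be a finite-dimensional local symmetric F-algebra and let n be the least natural number with J(A)^{n+1} = 0. Then J(A)^n = soc(A). -/
open Module

/-!
The form `B(a, b) = s(ab)` is nondegenerate and symmetric, and `soc(A)` is the
`B`-orthogonal of `J(A)`. Since `A = J(A) ⊕ F·1`, this gives `dim soc(A) = 1`.
As `J(A)^n · J(A) = 0` we have `0 ≠ J(A)^n ⊆ soc(A)`, hence equality.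
-/

section SymmetricAlgebra

variable {F A : Type*} [Field F] [Ring A] [Algebra F A]

def mulForm (s : A →ₗ[F] F) : LinearMap.BilinForm F A :=
  (LinearMap.mul F A).compr₂ s

@[simp]
theorem mulForm_apply (s : A →ₗ[F] F) (a b : A) : mulForm s a b = s (a * b) := rfl

theorem eq_zero_of_forall_apply_mul_eq_zero {s : A →ₗ[F] F}
    (hker : ∀ I : Ideal A, (I : Set A) ⊆ {x | s x = 0} → I = ⊥)
    {x : A} (hx : ∀ r : A, s (r * x) = 0) : x = 0 := by
  refine Ideal.span_singleton_eq_bot.mp (hker _ ?_)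
  rintro _ hy
  obtain ⟨r, rfl⟩ := Ideal.mem_span_singleton'.mp hy
  exact hx r

theorem mulForm_nondegenerate {s : A →ₗ[F] F} (hs : ∀ a b : A, s (a * b) = s (b * a))
    (hker : ∀ I : Ideal A, (I : Set A) ⊆ {x | s x = 0} → I = ⊥) :
    (mulForm s).Nondegenerate := by
  have hrefl : (mulForm s).IsRefl := fun a b h => by rwa [mulForm_apply, hs] at h
  exact hrefl.nondegenerate_iff_separatingRight.mpr fun _ hx =>
    eq_zero_of_forall_apply_mul_eq_zero hker hx

theorem socl_eq_orthogonal_jrad {s : A →ₗ[F] F} (hs : ∀ a b : A, s (a * b) = s (b * a))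
    (hker : ∀ I : Ideal A, (I : Set A) ⊆ {x | s x = 0} → I = ⊥) :
    socl F A = (mulForm s).orthogonal (jrad F A) := by
  apply le_antisymm
  · intro a ha b hb
    change s (b * a) = 0
    rw [hs, ha b hb, map_zero]
  · intro a ha c hc
    refine eq_zero_of_forall_apply_mul_eq_zero hker fun r => ?_
    -- `s (r a c) = s (c r a)` and `c r ∈ J(A)`
    rw [← mul_assoc, hs, ← mul_assoc]
    exact ha (c * r) (Ideal.mul_mem_right r _ hc)

theorem one_notMem_jrad [Nontrivial A] : (1 : A) ∉ jrad F A := fun h =>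
  bot_ne_top (Ideal.jacobson_eq_top_iff.mp ((Ideal.eq_top_iff_one _).mpr h))

theorem isCompl_jrad_span_one [Nontrivial A]
    (hloc : ∀ a : A, ∃ c : F, a - algebraMap F A c ∈ Ideal.jacobson (⊥ : Ideal A)) :
    IsCompl (jrad F A) (F ∙ (1 : A)) := by
  refine ⟨(Submodule.disjoint_span_singleton' one_ne_zero).mpr one_notMem_jrad, ?_⟩
  rw [codisjoint_iff, eq_top_iff]
  intro a _
  obtain ⟨c, hc⟩ := hloc a
  rw [Submodule.mem_sup]
  refine ⟨_, hc, c • 1, Submodule.smul_mem _ c (Submodule.mem_span_singleton_self 1), ?_⟩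
  rw [← Algebra.algebraMap_eq_smul_one, sub_add_cancel]

theorem finrank_socl_eq_one [FiniteDimensional F A] [Nontrivial A]
    (hloc : ∀ a : A, ∃ c : F, a - algebraMap F A c ∈ Ideal.jacobson (⊥ : Ideal A))
    {s : A →ₗ[F] F} (hs : ∀ a b : A, s (a * b) = s (b * a))
    (hker : ∀ I : Ideal A, (I : Set A) ⊆ {x | s x = 0} → I = ⊥) :
    finrank F (socl F A) = 1 := by
  have hsum := Submodule.finrank_add_eq_of_isCompl (isCompl_jrad_span_one hloc)
  rw [finrank_span_singleton one_ne_zero] at hsum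
  rw [socl_eq_orthogonal_jrad hs hker,
    LinearMap.BilinForm.finrank_orthogonal (mulForm_nondegenerate hs hker)]
  omega

theorem jrad_pow_le_socl {n : ℕ} (hn : jrad F A ^ (n + 1) = ⊥) : jrad F A ^ n ≤ socl F A :=
  fun _ hx b hb => by
    simpa [← pow_succ, hn] using Submodule.mul_mem_mul hx (show b ∈ jrad F A from hb)

end SymmetricAlgebra

/-- In a finite-dimensional local symmetric F-algebra, if n is the least natural number
with J(A)^(n+1) = 0, then J(A)^n = soc(A). -/
theorem jacobson_pow_eq_socle
    (F A : Type*) [Field F] [Ring A] [Algebra F A] [FiniteDimensional F A]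
    (hloc : ∀ a : A, ∃ c : F, a - algebraMap F A c ∈ Ideal.jacobson (⊥ : Ideal A))
    (s : A →ₗ[F] F) (hs : ∀ a b : A, s (a * b) = s (b * a))
    (hker : ∀ I : Ideal A, (I : Set A) ⊆ {x | s x = 0} → I = ⊥)
    (n : ℕ) (hn : jrad F A ^ (n + 1) = ⊥)
    (hleast : ∀ m : ℕ, jrad F A ^ (m + 1) = ⊥ → n ≤ m) :
    jrad F A ^ n = socl F A := by
  rcases subsingleton_or_nontrivial A with hA | hA
  · exact Subsingleton.elim _ _
  have hne : jrad F A ^ n ≠ ⊥ := by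
    rcases n with _ | m
    · rw [pow_zero, Submodule.one_eq_span, Ne, Submodule.span_singleton_eq_bot]
      exact one_ne_zero
    · exact fun h => by simpa using hleast m h
  refine Submodule.eq_of_le_of_finrank_le (jrad_pow_le_socl hn) ?_
  rw [finrank_socl_eq_one hloc hs hker, Nat.one_le_iff_ne_zero, Ne, Submodule.finrank_eq_zero]
  exact hne
end

section
/- Let A be an F-algebra, I a two-sided ideal in A, and n a natural number. Suppose I^n = F-span{x_{i1}⋯x_{in} : i = 1,…,d} + I^{n+1} for elements x_{ij} ∈ I. Then I^{n+1} = F-span{x_{j1}·x_{i1}⋯x_{in} : i,j = 1,…,d} + I^{n+2}. -/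
/-! Write each generator as `x_{j1} * t_j` with `t_j ∈ I^(n-1)`. Then
`x_{j1}⋯x_{jn} * I ⊆ x_{j1} * I^n ⊆ x_{j1} * (span{x_{i1}⋯x_{in}} + I^(n+1))`, which lies in
`span{x_{j1} x_{i1}⋯x_{in}} + I^(n+2)`; since `I^(n+1) = I^n * I`, this covers `I^(n+1)`.
The reverse inclusion only needs `I^(n+2) ⊆ I^(n+1)`, i.e. `I * I ⊆ I`. -/

open scoped Pointwise

namespace Submodule

variable {R A : Type*} [CommSemiring R] [Semiring A] [Algebra R A] {M : Submodule R A}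

theorem list_prod_ofFn_mem_pow {n : ℕ} {f : Fin n → A} (hf : ∀ k, f k ∈ M) :
    (List.ofFn f).prod ∈ M ^ n := by
  induction n with
  | zero => simp [← one_le]
  | succ n ih =>
    rw [List.ofFn_succ, List.prod_cons, pow_succ']
    exact mul_mem_mul (hf 0) (ih fun k => hf k.succ)

theorem pow_add_two_le_pow_succ (hM : M * M ≤ M) (k : ℕ) : M ^ (k + 2) ≤ M ^ (k + 1) :=
  calc M ^ (k + 2) = M ^ k * (M * M) := by rw [pow_add, sq]
    _ ≤ M ^ k * M := _root_.mul_le_mul_right hM _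
    _ = M ^ (k + 1) := (pow_succ M k).symm

theorem span_singleton_list_prod_ofFn_mul_le {n : ℕ} (hn : 0 < n) {f : Fin n → A}
    (hf : ∀ k, f k ∈ M) :
    span R {(List.ofFn f).prod} * M ≤ span R {f ⟨0, hn⟩} * M ^ n := by
  obtain ⟨m, rfl⟩ := Nat.exists_eq_succ_of_ne_zero hn.ne'
  have htail : span R {(List.ofFn fun k : Fin m => f k.succ).prod} ≤ M ^ m :=
    (span_singleton_le_iff_mem _ _).2 (list_prod_ofFn_mem_pow fun k => hf k.succ)
  rw [List.ofFn_succ, List.prod_cons, ← Set.singleton_mul_singleton, ← span_mul_span, mul_assoc,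
    pow_succ]
  exact _root_.mul_le_mul_right (_root_.mul_le_mul_left htail _) _

theorem span_singleton_mul_pow_le {a : A} (ha : a ∈ M) {S : Set A} {n : ℕ}
    (hS : M ^ n ≤ span R S ⊔ M ^ (n + 1)) :
    span R {a} * M ^ n ≤ span R (({a} : Set A) * S) ⊔ M ^ (n + 2) :=
  calc span R {a} * M ^ n ≤ span R {a} * (span R S ⊔ M ^ (n + 1)) := _root_.mul_le_mul_right hS _
    _ = span R (({a} : Set A) * S) ⊔ span R {a} * M ^ (n + 1) := by rw [mul_sup, span_mul_span]
    _ ≤ span R (({a} : Set A) * S) ⊔ M ^ (n + 2) := by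
      rw [pow_succ' M (n + 1)]
      exact sup_le_sup_left (_root_.mul_le_mul_left ((span_singleton_le_iff_mem _ _).2 ha) _) _

end Submodule

open Submodule

/-- Külshammer's Lemma E: if I^n is spanned modulo I^(n+1) by the products
x_{i1}⋯x_{in}, then I^(n+1) is spanned modulo I^(n+2) by the products
x_{j1}·x_{i1}⋯x_{in}. -/
theorem ideal_pow_succ_span
    (F A : Type*) [Field F] [Ring A] [Algebra F A]
    (I : Submodule F A)
    (hI : ∀ (a x : A), x ∈ I → a * x ∈ I ∧ x * a ∈ I)
    (d n : ℕ) (hn : 0 < n) (x : Fin d → Fin n → A) (hx : ∀ i j, x i j ∈ I)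
    (hspan : I ^ n =
      Submodule.span F {y : A | ∃ i : Fin d, y = (List.ofFn (x i)).prod} ⊔ I ^ (n + 1)) :
    I ^ (n + 1) =
      Submodule.span F
        {y : A | ∃ i j : Fin d, y = x j ⟨0, hn⟩ * (List.ofFn (x i)).prod} ⊔ I ^ (n + 2) := by
  set S := {y : A | ∃ i : Fin d, y = (List.ofFn (x i)).prod}
  set T := {y : A | ∃ i j : Fin d, y = x j ⟨0, hn⟩ * (List.ofFn (x i)).prod}
  have hII : I * I ≤ I := mul_le.2 fun a _ b hb => (hI a b hb).1
  have hST : ∀ j, ({x j ⟨0, hn⟩} : Set A) * S ⊆ T := by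
    rintro j _ ⟨_, rfl, _, ⟨i, rfl⟩, rfl⟩
    exact ⟨i, j, rfl⟩
  apply le_antisymm
  · have hSI : span F S * I ≤ span F T ⊔ I ^ (n + 2) := by
      rw [span_eq_iSup_of_singleton_spans]
      simp only [iSup_mul]
      refine iSup₂_le fun _ ⟨j, hj⟩ => hj ▸ ?_
      calc span F {(List.ofFn (x j)).prod} * I ≤ span F {x j ⟨0, hn⟩} * I ^ n :=
            span_singleton_list_prod_ofFn_mul_le hn (hx j)
        _ ≤ span F (({x j ⟨0, hn⟩} : Set A) * S) ⊔ I ^ (n + 2) :=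
            span_singleton_mul_pow_le (hx j _) hspan.le
        _ ≤ span F T ⊔ I ^ (n + 2) := sup_le_sup_right (span_mono (hST j)) _
    calc I ^ (n + 1) = I ^ n * I := pow_succ I n
      _ ≤ (span F S ⊔ I ^ (n + 1)) * I := _root_.mul_le_mul_left hspan.le _
      _ = span F S * I ⊔ I ^ (n + 2) := by rw [Submodule.sup_mul, ← pow_succ]
      _ ≤ span F T ⊔ I ^ (n + 2) := sup_le hSI le_sup_right
  · refine sup_le (span_le.2 ?_) (pow_add_two_le_pow_succ hII n)
    rintro _ ⟨i, j, rfl⟩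
    rw [SetLike.mem_coe, pow_succ']
    exact mul_mem_mul (hx j _) (list_prod_ofFn_mem_pow (hx i))
end

section
/- Let A be a finite-dimensional local symmetric F-algebra and let n ∈ ℕ be such that dim_F( J(A)^n / J(A)^{n+1} ) = 1. Then J(A)^{n-1} ⊆ Z(A). -/
open Module

/-!
Write `J` for the radical, `T` for the largest exponent with `J^T ≠ 0`, and
`f(x, y, w) = s (x * ⁅y, w⁆)`; since `s` is a trace form, `f` is alternating. If one layer
`J^n/J^(n+1)` is one-dimensional, all deeper layers have dimension at most one, and on them the
pairing `J^(T-a) × J^a/J^(a+1) → F` induced by `s` is nondegenerate.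
We show that `J^M` is central by descending induction on `M ≥ n - 1`: for `z ∈ J^M` and `j ∈ J`
the commutator `⁅z, j⁆` is pushed one layer deeper at a time until it vanishes. By
nondegeneracy it suffices that `f(u, z, j) = 0` for `u ∈ J^(T-a)`. When `T - a ≥ 2` this follows
from the centrality of `J^(M+1)` through `f(u, z'w, j) = f(uz', w, j) + f(wu, z', j)`; when
`T - a = 1`, the form `(u, j) ↦ f(u, z, j)` on `J` factors through the one-dimensional layer
`J^(T-1)/J^T` containing the commutators, and an alternating form of rank one is zero.
-/

theorem exists_pow_ne_zero_and_pow_succ_eq_zero {R : Type*} [MonoidWithZero R] {x : R}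
    (hx : IsNilpotent x) {n : ℕ} (hn : x ^ n ≠ 0) :
    ∃ T, n ≤ T ∧ x ^ T ≠ 0 ∧ x ^ (T + 1) = 0 := by
  have : Nontrivial R := ⟨⟨_, _, hn⟩⟩
  obtain ⟨hT1, hT⟩ := nilpotencyClass_eq_succ_iff.mp
    (Nat.succ_pred_eq_of_pos (pos_nilpotencyClass_iff.mpr hx)).symm
  exact ⟨_, by by_contra! h; exact hn (pow_eq_zero_of_le h hT1), hT, hT1⟩

namespace Submodule

variable {K V : Type*} [Field K] [AddCommGroup V] [Module K V]

theorem exists_smul_add_of_le_span_singleton_sup {P Q : Submodule K V} {t x : V}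
    (h : P ≤ span K {t} ⊔ Q) (hx : x ∈ P) : ∃ c : K, ∃ q ∈ Q, x = c • t + q := by
  obtain ⟨y, hy, q, hq, rfl⟩ := mem_sup.mp (h hx)
  obtain ⟨c, rfl⟩ := mem_span_singleton.mp hy
  exact ⟨c, q, hq, rfl⟩

theorem exists_le_span_singleton_sup_of_finrank_quotient_eq_one {P Q : Submodule K V}
    (h : finrank K (P ⧸ Q.comap P.subtype) = 1) : ∃ t ∈ P, t ∉ Q ∧ P ≤ span K {t} ⊔ Q := by
  obtain ⟨v, hv0, hv⟩ := finrank_eq_one_iff'.mp h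
  obtain ⟨⟨t, ht⟩, rfl⟩ := Quotient.mk_surjective _ v
  refine ⟨t, ht, fun htQ => hv0 ((Quotient.mk_eq_zero _).mpr htQ), fun x hx => ?_⟩
  obtain ⟨c, hc⟩ := hv (Quotient.mk ⟨x, hx⟩)
  rw [← Quotient.mk_smul, Quotient.eq] at hc
  refine mem_sup.mpr ⟨c • t, smul_mem _ _ (mem_span_singleton_self t), x - c • t, ?_, by abel⟩
  simpa using Q.neg_mem hc

end Submodule

section TraceForm

variable {R A : Type*} [CommRing R] [Ring A] [Algebra R A] (s : A →ₗ[R] R)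

theorem map_mul_smul_add {v t h : A} (c : R) (hvh : v * h = 0) :
    s (v * (c • t + h)) = c * s (v * t) := by
  rw [mul_add, mul_smul_comm, map_add, map_smul, hvh, map_zero, add_zero, smul_eq_mul]

variable {s} (hs : ∀ a b : A, s (a * b) = s (b * a))
include hs

theorem map_mul_lie_self_eq_zero (u z : A) : s (u * ⁅z, u⁆) = 0 := by
  rw [Ring.lie_def, mul_sub, map_sub, ← mul_assoc, hs (u * z) u, sub_self]

theorem map_mul_lie_eq_neg (a b c : A) : s (a * ⁅b, c⁆) = -s (c * ⁅b, a⁆) := by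
  have h₁ : s (a * (b * c)) = s (c * (a * b)) := by rw [← mul_assoc, hs]
  have h₂ : s (a * (c * b)) = s (c * (b * a)) := by
    rw [← mul_assoc, hs, ← mul_assoc, hs (b * a)]
  simp only [Ring.lie_def, mul_sub, map_sub, h₁, h₂]
  ring

theorem map_mul_lie_eq_zero_of_mem_center {c : A} (hc : c ∈ Subalgebra.center R A) (x y : A) :
    s (c * ⁅x, y⁆) = 0 := by
  rw [Subalgebra.mem_center_iff] at hc
  have h : s (c * (y * x)) = s (c * (x * y)) := by
    rw [← mul_assoc, ← hc y, mul_assoc, hs, mul_assoc]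
  rw [Ring.lie_def, mul_sub, map_sub, h, sub_self]

theorem map_mul_lie_mul (u z w j : A) :
    s (u * ⁅z * w, j⁆) = s (u * z * ⁅w, j⁆) + s (w * u * ⁅z, j⁆) := by
  have h₁ : s (u * (j * (z * w))) = s (w * (u * (j * z))) := by
    rw [← hs (u * (j * z))]; simp only [mul_assoc]
  have h₂ : s (u * (z * (j * w))) = s (w * (u * (z * j))) := by
    rw [← hs (u * (z * j))]; simp only [mul_assoc]
  simp only [Ring.lie_def, mul_sub, map_sub, mul_assoc, h₁, h₂]
  ring

end TraceForm

theorem Submodule.mul_mem_pow_add {R A : Type*} [CommSemiring R] [Semiring A] [Algebra R A]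
    {M : Submodule R A} {p q : ℕ} {x y : A} (hx : x ∈ M ^ p) (hy : y ∈ M ^ q) :
    x * y ∈ M ^ (p + q) :=
  pow_add M p q ▸ Submodule.mul_mem_mul hx hy

section Radical

variable {F A : Type*} [Field F] [Ring A] [Algebra F A]

theorem jrad_pow_eq_restrictScalars {k : ℕ} (hk : k ≠ 0) :
    jrad F A ^ k = (Ideal.jacobson (⊥ : Ideal A) ^ k).restrictScalars F :=
  (Submodule.restrictScalars_pow hk).symm

theorem isNilpotent_jrad [FiniteDimensional F A] : IsNilpotent (jrad F A) := by
  have := IsArtinianRing.of_finite F A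
  obtain ⟨N, hN⟩ := IsArtinianRing.isNilpotent_jacobson_bot (R := A)
  refine ⟨N + 1, ?_⟩
  rw [jrad_pow_eq_restrictScalars N.add_one_ne_zero, Submodule.pow_succ, hN]
  simp

theorem mul_mem_jrad_pow_left {k : ℕ} (hk : k ≠ 0) (a : A) {x : A} (hx : x ∈ jrad F A ^ k) :
    a * x ∈ jrad F A ^ k := by
  rw [jrad_pow_eq_restrictScalars hk] at hx ⊢
  exact Submodule.smul_mem _ a hx

theorem jrad_pow_le_pow {k l : ℕ} (hk : k ≠ 0) (hkl : k ≤ l) : jrad F A ^ l ≤ jrad F A ^ k := by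
  induction l, hkl using Nat.le_induction with
  | base => exact le_rfl
  | succ l hkl ih =>
    refine le_trans ?_ ih
    rw [pow_succ']
    exact Submodule.mul_le.mpr fun j _ x hx => mul_mem_jrad_pow_left (by omega) j hx

theorem mul_mem_jrad_pow_succ {p q k : ℕ} {x y : A} (hx : x ∈ jrad F A ^ p)
    (hy : y ∈ jrad F A ^ q) (hk : k + 1 ≤ p + q) : x * y ∈ jrad F A ^ (k + 1) :=
  jrad_pow_le_pow k.add_one_ne_zero hk (Submodule.mul_mem_pow_add hx hy)

theorem jrad_pow_eq_bot_of_le {T m : ℕ} (hT : jrad F A ^ T = ⊥) (hTm : T ≤ m) :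
    jrad F A ^ m = ⊥ :=
  pow_eq_zero_of_le hTm hT

theorem mul_eq_zero_of_mem_jrad_pow {T p q : ℕ} {x y : A} (hT : jrad F A ^ T = ⊥)
    (hx : x ∈ jrad F A ^ p) (hy : y ∈ jrad F A ^ q) (hpq : T ≤ p + q) : x * y = 0 := by
  simpa [jrad_pow_eq_bot_of_le hT hpq] using Submodule.mul_mem_pow_add hx hy

theorem mem_center_of_forall_lie_eq_zero
    (hloc : ∀ a : A, ∃ c : F, a - algebraMap F A c ∈ Ideal.jacobson (⊥ : Ideal A))
    {z : A} (hz : ∀ j ∈ jrad F A, ⁅z, j⁆ = 0) : z ∈ Subalgebra.center F A := by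
  rw [Subalgebra.mem_center_iff]
  intro b
  obtain ⟨c, hc⟩ := hloc b
  have h : b * z - z * b = (algebraMap F A c * z - z * algebraMap F A c)
      - ⁅z, b - algebraMap F A c⁆ := by
    rw [Ring.lie_def]; noncomm_ring
  rwa [Algebra.commutes, sub_self, hz _ hc, sub_zero, sub_eq_zero] at h

end Radical

def JradLayerIsCyclic (F A : Type*) [Field F] [Ring A] [Algebra F A] (a : ℕ) : Prop :=
  ∃ t : A, jrad F A ^ a ≤ Submodule.span F {t} ⊔ jrad F A ^ (a + 1)

namespace JradLayerIsCyclic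

variable {F A : Type*} [Field F] [Ring A] [Algebra F A]

theorem succ {m : ℕ} (h : JradLayerIsCyclic F A (m + 1)) : JradLayerIsCyclic F A (m + 2) := by
  obtain ⟨t, ht⟩ := h
  have hj : ∀ {j : A}, j ∈ jrad F A → j ∈ jrad F A ^ 1 := fun hj => by rwa [pow_one]
  by_cases hstable : jrad F A ^ (m + 1) ≤ jrad F A ^ (m + 2)
  · refine ⟨0, le_sup_of_le_right ?_⟩
    rw [pow_succ' _ (m + 1)]
    exact Submodule.mul_le.mpr fun j hj' x hx =>
      mul_mem_jrad_pow_succ (hj hj') (hstable hx) (by omega)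
  obtain ⟨v, hv, z, hz, hvz⟩ : ∃ v ∈ jrad F A, ∃ z ∈ jrad F A ^ m, v * z ∉ jrad F A ^ (m + 2) := by
    by_contra! h
    exact hstable (pow_succ' (jrad F A) m ▸ Submodule.mul_le.mpr h)
  obtain ⟨c, h, hh, hvz_eq⟩ := Submodule.exists_smul_add_of_le_span_singleton_sup ht
    (mul_mem_jrad_pow_succ (hj hv) hz (by omega))
  have hc : c ≠ 0 := by
    rintro rfl
    exact hvz (by rwa [hvz_eq, zero_smul, zero_add])
  -- `t * w ≡ c⁻¹ • v * z * w ≡ (c⁻¹ * b) • v * t` modulo `J^(m+3)`, where `z * w ≡ b • t`.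
  have htw : ∀ w ∈ jrad F A, t * w ∈ Submodule.span F {v * t} ⊔ jrad F A ^ (m + 3) := by
    intro w hw
    obtain ⟨b, q, hq, hzw_eq⟩ := Submodule.exists_smul_add_of_le_span_singleton_sup ht
      (mul_mem_jrad_pow_succ hz (hj hw) (by omega))
    have key : t * w = c⁻¹ • (b • (v * t) + (v * q - h * w)) := by
      rw [eq_inv_smul_iff₀ hc, ← smul_mul_assoc, ← mul_smul_comm, eq_sub_of_add_eq hvz_eq.symm,
        eq_sub_of_add_eq hzw_eq.symm]
      noncomm_ring
    rw [key]
    refine Submodule.smul_mem _ _ (add_mem (Submodule.mem_sup_left ?_) (Submodule.mem_sup_right ?_))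
    · exact Submodule.smul_mem _ _ (Submodule.mem_span_singleton_self _)
    · exact sub_mem (mul_mem_jrad_pow_succ (hj hv) hq (by omega))
        (mul_mem_jrad_pow_succ hh (hj hw) (by omega))
  refine ⟨v * t, ?_⟩
  rw [pow_succ _ (m + 1)]
  refine Submodule.mul_le.mpr fun x hx w hw => ?_
  obtain ⟨d, h', hh', rfl⟩ := Submodule.exists_smul_add_of_le_span_singleton_sup ht hx
  rw [add_mul, smul_mul_assoc]
  exact add_mem (Submodule.smul_mem _ _ (htw w hw))
    (Submodule.mem_sup_right (mul_mem_jrad_pow_succ hh' (hj hw) (by omega)))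

theorem of_le {n a : ℕ} (hn : n ≠ 0) (h : JradLayerIsCyclic F A n) (hna : n ≤ a) :
    JradLayerIsCyclic F A a := by
  induction a, hna using Nat.le_induction with
  | base => exact h
  | succ a hna ih =>
    obtain ⟨a, rfl⟩ : ∃ a', a = a' + 1 := ⟨a - 1, by omega⟩
    exact ih.succ

end JradLayerIsCyclic

section SymmetricAlgebra

variable {F A : Type*} [Field F] [Ring A] [Algebra F A] {s : A →ₗ[F] F}

theorem jrad_pow_eq_bot_of_forall_map_eq_zero
    (hker : ∀ I : Ideal A, (I : Set A) ⊆ {x | s x = 0} → I = ⊥) {k : ℕ} (hk : k ≠ 0)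
    (h : ∀ x ∈ jrad F A ^ k, s x = 0) : jrad F A ^ k = ⊥ := by
  rw [jrad_pow_eq_restrictScalars hk] at h ⊢
  rw [hker _ h, Submodule.restrictScalars_bot]

theorem mem_jrad_pow_succ_of_forall_map_mul_eq_zero
    (hker : ∀ I : Ideal A, (I : Set A) ⊆ {x | s x = 0} → I = ⊥) {T a : ℕ} (hT0 : T ≠ 0)
    (hT : jrad F A ^ T ≠ ⊥) (hT1 : jrad F A ^ (T + 1) = ⊥) (hlay : JradLayerIsCyclic F A a)
    (haT : a ≤ T) {x : A} (hx : x ∈ jrad F A ^ a) (hsx : ∀ u ∈ jrad F A ^ (T - a), s (u * x) = 0) :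
    x ∈ jrad F A ^ (a + 1) := by
  obtain ⟨t, ht⟩ := hlay
  have hpair : ∀ u ∈ jrad F A ^ (T - a), ∀ c : F, ∀ h ∈ jrad F A ^ (a + 1),
      s (u * (c • t + h)) = c * s (u * t) := fun u hu c h hh =>
    map_mul_smul_add s c (mul_eq_zero_of_mem_jrad_pow hT1 hu hh (by omega))
  obtain ⟨ε, h, hh, rfl⟩ := Submodule.exists_smul_add_of_le_span_singleton_sup ht hx
  obtain rfl | hε := eq_or_ne ε 0
  · rwa [zero_smul, zero_add]
  have ht0 : ∀ u ∈ jrad F A ^ (T - a), s (u * t) = 0 := fun u hu =>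
    (mul_eq_zero.mp ((hpair u hu ε h hh).symm.trans (hsx u hu))).resolve_left hε
  refine absurd (jrad_pow_eq_bot_of_forall_map_eq_zero hker hT0 fun y hy => ?_) hT
  rw [show T = (T - a) + a by omega, pow_add] at hy
  refine Submodule.mul_induction_on hy (fun u hu y hy => ?_) fun y y' hy hy' => ?_
  · obtain ⟨c, h', hh', rfl⟩ := Submodule.exists_smul_add_of_le_span_singleton_sup ht hy
    rw [hpair u hu c h' hh', ht0 u hu, mul_zero]
  · rw [map_add, hy, hy', add_zero]

variable (hs : ∀ a b : A, s (a * b) = s (b * a))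
include hs

theorem map_mul_lie_eq_zero_of_jrad_pow_add_two_eq_bot {a : ℕ}
    (hlay : JradLayerIsCyclic F A a) (hT : jrad F A ^ (a + 2) = ⊥) {z : A}
    (hz : ∀ j ∈ jrad F A, ⁅z, j⁆ ∈ jrad F A ^ a) {u j : A} (hu : u ∈ jrad F A)
    (hj : j ∈ jrad F A) : s (u * ⁅z, j⁆) = 0 := by
  obtain ⟨t, ht⟩ := hlay
  have hpair : ∀ v ∈ jrad F A, ∀ c : F, ∀ h ∈ jrad F A ^ (a + 1),
      s (v * (c • t + h)) = c * s (v * t) := fun v hv c h hh =>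
    map_mul_smul_add s c (mul_eq_zero_of_mem_jrad_pow hT (by rwa [pow_one]) hh (by omega))
  obtain ⟨εj, hj', hhj, hzj⟩ := Submodule.exists_smul_add_of_le_span_singleton_sup ht (hz j hj)
  obtain ⟨εu, hu', hhu, hzu⟩ := Submodule.exists_smul_add_of_le_span_singleton_sup ht (hz u hu)
  have hdiag : εu * s (u * t) = 0 := by
    rw [← hpair u hu εu hu' hhu, ← hzu, map_mul_lie_self_eq_zero hs]
  rcases mul_eq_zero.mp hdiag with h | h
  · rw [map_mul_lie_eq_neg hs, hzu, hpair j hj εu hu' hhu, h, zero_mul, neg_zero]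
  · rw [hzj, hpair u hu εj hj' hhj, h, mul_zero]

theorem map_mul_lie_eq_zero_of_jrad_pow_le_center {M : ℕ}
    (hM : jrad F A ^ (M + 1) ≤ Subalgebra.toSubmodule (Subalgebra.center F A)) (j : A) {m p : ℕ}
    {u z : A} (hu : u ∈ jrad F A ^ p) (hz : z ∈ jrad F A ^ m) (hpm : M + 2 ≤ p + m) :
    s (u * ⁅z, j⁆) = 0 := by
  induction m generalizing p u z with
  | zero =>
    obtain ⟨c, rfl⟩ := Submodule.mem_one.mp (by rwa [pow_zero] at hz)
    rw [Ring.lie_def, Algebra.commutes, sub_self, mul_zero, map_zero]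
  | succ m ih =>
    rw [pow_succ] at hz
    refine Submodule.mul_induction_on hz (fun z hz w hw => ?_) fun x y hx hy => ?_
    · rw [map_mul_lie_mul hs, map_mul_lie_eq_zero_of_mem_center hs
        (hM (mul_mem_jrad_pow_succ hu hz (by omega))), zero_add]
      exact ih (p := p + 1) (mul_mem_jrad_pow_succ (by rwa [pow_one]) hu (by omega)) hz (by omega)
    · have h : ⁅x + y, j⁆ = ⁅x, j⁆ + ⁅y, j⁆ := by simp only [Ring.lie_def]; noncomm_ring
      rw [h, mul_add, map_add, hx, hy, add_zero]

variable (hker : ∀ I : Ideal A, (I : Set A) ⊆ {x | s x = 0} → I = ⊥)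
include hker

theorem lie_mem_jrad_pow_of_jrad_pow_le_center {T M : ℕ} (hT : jrad F A ^ T ≠ ⊥)
    (hT1 : jrad F A ^ (T + 1) = ⊥) (hlay : ∀ a, M + 1 ≤ a → JradLayerIsCyclic F A a)
    (hM : jrad F A ^ (M + 1) ≤ Subalgebra.toSubmodule (Subalgebra.center F A)) {z : A}
    (hz : z ∈ jrad F A ^ M) {a : ℕ} (ha : M + 1 ≤ a) :
    ∀ j ∈ jrad F A, ⁅z, j⁆ ∈ jrad F A ^ a := by
  induction a, ha using Nat.le_induction with
  | base =>
    intro j hj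
    have hj : j ∈ jrad F A ^ 1 := by rwa [pow_one]
    exact sub_mem (mul_mem_jrad_pow_succ hz hj (by omega)) (mul_mem_jrad_pow_succ hj hz (by omega))
  | succ a ha ih =>
    intro j hj
    rcases lt_or_ge T a with hTa | haT
    · rw [jrad_pow_eq_bot_of_le hT1 hTa] at ih
      rw [(Submodule.mem_bot F).mp (ih j hj)]
      exact zero_mem _
    refine mem_jrad_pow_succ_of_forall_map_mul_eq_zero hker (by omega) hT hT1 (hlay a ha) haT
      (ih j hj) fun u hu => ?_
    obtain h0 | h1 | h2 : T - a = 0 ∨ T - a = 1 ∨ 2 ≤ T - a := by omega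
    · rw [h0, pow_zero] at hu
      obtain ⟨c, rfl⟩ := Submodule.mem_one.mp hu
      exact map_mul_lie_eq_zero_of_mem_center hs (Subalgebra.algebraMap_mem _ c) _ _
    · rw [h1, pow_one] at hu
      exact map_mul_lie_eq_zero_of_jrad_pow_add_two_eq_bot hs (hlay a ha)
        (by rwa [show a + 2 = T + 1 by omega]) ih hu hj
    · exact map_mul_lie_eq_zero_of_jrad_pow_le_center hs hM j hu hz (by omega)

theorem jrad_pow_le_center_of_succ
    (hloc : ∀ a : A, ∃ c : F, a - algebraMap F A c ∈ Ideal.jacobson (⊥ : Ideal A))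
    {T M : ℕ} (hT : jrad F A ^ T ≠ ⊥) (hT1 : jrad F A ^ (T + 1) = ⊥)
    (hlay : ∀ a, M + 1 ≤ a → JradLayerIsCyclic F A a)
    (hM : jrad F A ^ (M + 1) ≤ Subalgebra.toSubmodule (Subalgebra.center F A)) :
    jrad F A ^ M ≤ Subalgebra.toSubmodule (Subalgebra.center F A) := by
  refine fun z hz => mem_center_of_forall_lie_eq_zero hloc fun j hj => ?_
  have h := lie_mem_jrad_pow_of_jrad_pow_le_center hs hker hT hT1 hlay hM hz
    (le_max_left (M + 1) (T + 1)) j hj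
  rwa [jrad_pow_eq_bot_of_le hT1 (le_max_right _ _), Submodule.mem_bot] at h

end SymmetricAlgebra

/-- Külshammer's Lemma G: in a finite-dimensional local symmetric F-algebra,
if dim (J^n/J^(n+1)) = 1 then J^(n-1) ⊆ Z(A). -/
theorem jacobson_pow_le_center
    (F A : Type*) [Field F] [Ring A] [Algebra F A] [FiniteDimensional F A]
    (hloc : ∀ a : A, ∃ c : F, a - algebraMap F A c ∈ Ideal.jacobson (⊥ : Ideal A))
    (s : A →ₗ[F] F) (hs : ∀ a b : A, s (a * b) = s (b * a))
    (hker : ∀ I : Ideal A, (I : Set A) ⊆ {x | s x = 0} → I = ⊥)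
    (n : ℕ) (hn : 1 ≤ n)
    (hdim : finrank F
      (↥(jrad F A ^ n) ⧸ Submodule.comap (jrad F A ^ n).subtype (jrad F A ^ (n + 1))) = 1) :
    jrad F A ^ (n - 1) ≤ Subalgebra.toSubmodule (Subalgebra.center F A) := by
  obtain ⟨t, htn, htn1, hlay⟩ :=
    Submodule.exists_le_span_singleton_sup_of_finrank_quotient_eq_one hdim
  have hJn : jrad F A ^ n ≠ ⊥ := fun h => htn1 <| by
    rw [h, Submodule.mem_bot] at htn
    exact htn ▸ zero_mem _
  obtain ⟨T, hnT, hT, hT1⟩ := exists_pow_ne_zero_and_pow_succ_eq_zero isNilpotent_jrad hJn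
  have hcyc : ∀ a, n ≤ a → JradLayerIsCyclic F A a :=
    fun a ha => JradLayerIsCyclic.of_le (by omega) ⟨t, hlay⟩ ha
  refine Nat.decreasingInduction
    (motive := fun M _ => n ≤ M + 1 → jrad F A ^ M ≤ Subalgebra.toSubmodule (Subalgebra.center F A))
    (fun M _ ih hM => jrad_pow_le_center_of_succ hs hker hloc hT hT1
      (fun a ha => hcyc a (by omega)) (ih (by omega)))
    (fun _ => hT1 ▸ bot_le) (show n - 1 ≤ T + 1 by omega) (by omega)
end

section
/- Let A be a local F-algebra and let x, z ∈ J(A) be such that {x + J(A)^2, z + J(A)^2} is F-linearly independent in J(A)/J(A)^2 and xz = zx = z^2 = 0. Let (f_i) be the shifted Fibonacci sequence f_{-1} = f_0 = 1, f_i = f_{i-1} + f_{i-2}. Then there is a minimal projective resolution (P_i) of the trivial A-module A/J(A) such that the number of A-module generators of P_i in a minimal generating set is at least f_i for all i ≥ 0. In particular, the trivial A-module has infinite complexity. -/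
open Module

/-- The submodule J(A)·M of an A-module M, where J(A) is the Jacobson radical. -/
def radSMul (A : Type) [Ring A] (M : Type) [AddCommGroup M] [Module A M] :
    Submodule A M :=
  Submodule.span A {p : M | ∃ r ∈ Ideal.jacobson (⊥ : Ideal A), ∃ q : M, p = r • q}

/-- A minimal projective resolution of the trivial module A/J(A) over a ring A:
finitely generated projective modules `P n`, a surjective augmentation
`ε : P 0 → A/J(A)` and differentials `d n : P (n+1) → P n`, exact, and with all
syzygies contained in J(A) times the corresponding projective module. -/
structure MinProjRes (A : Type) [Ring A] where
  P : ℕ → Type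
  [acg : ∀ n, AddCommGroup (P n)]
  [mod : ∀ n, Module A (P n)]
  proj : ∀ n, Module.Projective A (P n)
  fg : ∀ n, Module.Finite A (P n)
  ε : P 0 →ₗ[A] (A ⧸ Ideal.jacobson (⊥ : Ideal A))
  d : ∀ n, P (n + 1) →ₗ[A] P n
  surj : Function.Surjective ε
  exact_zero : LinearMap.range (d 0) = LinearMap.ker ε
  exact : ∀ n, LinearMap.range (d (n + 1)) = LinearMap.ker (d n)
  min_zero : LinearMap.ker ε ≤ radSMul A (P 0)
  minimal : ∀ n, LinearMap.ker (d n) ≤ radSMul A (P (n + 1))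

attribute [instance] MinProjRes.acg MinProjRes.mod

/-- The dimension over F of an A-module, for A an F-algebra, via restriction of
scalars. -/
noncomputable def fdim (F A : Type) [Field F] [Ring A] [Algebra F A]
    (M : Type) [AddCommGroup M] [Module A M] : ℕ :=
  @Module.finrank F M _ _ (Module.compHom M (algebraMap F A))

/-!
Start from `1 ∈ P 0` and move up the resolution: given a family `w` in `P n`, independent modulo
`J(A)`, such that `z • w` and `x • (w ∘ Sum.inl)` are syzygies, lift these products along the
differential to `P (n + 1)`. Since `xz = zx = z² = 0` the lifts are again annihilated by `z`
(and the lifts of `z • w` by `x`). They are independent modulo `J(A)`: the differential of a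
minimal resolution maps `J(A)·P (n + 1)` into `J(A)²·P n`, so a relation among the lifts gives
coefficients `c • z + c' • x ∈ J(A)²`, which vanish because `x`, `z` are independent modulo `J(A)²`.
The sizes of the two parts evolve as `(a, b) ↦ (a + b, a)`, hence `P n / J(A)·P n` has dimension at
least `fib (n + 2) ≥ φ ⁿ`, bounding both the number of generators of `P n` and `dim_F P n`.
-/

open Filter

theorem goldenRatio_pow_le_fib_add_two (n : ℕ) : Real.goldenRatio ^ n ≤ Nat.fib (n + 2) := by
  rw [← Real.fib_succ_sub_goldenConj_mul_fib, Nat.fib_add_two, Nat.cast_add]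
  nlinarith [Real.neg_one_lt_goldenConj, (Nat.fib n).cast_nonneg (α := ℝ)]

theorem eventually_mul_pow_lt_pow {r : ℝ} (hr : 1 < r) (k : ℕ) (c : ℝ) :
    ∀ᶠ n : ℕ in atTop, c * (n : ℝ) ^ k < r ^ n := by
  have h := ((tendsto_pow_const_div_const_pow_of_one_lt k hr).const_mul c).eventually_lt_const
    (by simp : c * 0 < 1)
  filter_upwards [h] with n hn
  rwa [mul_div_assoc', div_lt_one (by positivity)] at hn

theorem Matrix.exists_mul_eq_one_of_linearIndependent_row {ι κ K : Type*} [Fintype ι] [Fintype κ]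
    [DecidableEq ι] [Field K] {V : Matrix ι κ K}
    (hV : LinearIndependent K V.row) : ∃ U : Matrix κ ι K, V * U = 1 := by
  rw [← Matrix.mulVec_surjective_iff_exists_right_inverse, ← Matrix.coe_mulVecLin,
    ← LinearMap.range_eq_top]
  apply Submodule.eq_top_of_finrank_eq
  rw [← Matrix.rank, hV.rank_matrix, Module.finrank_fintype_fun_eq_card]

theorem Submodule.span_range_comp_succAbove_eq {R M : Type*} [Ring R] [AddCommGroup M]
    [Module R M] {m : ℕ} {v : Fin (m + 1) → M} {a : Fin (m + 1) → R}
    (ha : ∑ j, a j • v j = 0) {i : Fin (m + 1)} (hi : IsUnit (a i)) :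
    Submodule.span R (Set.range (v ∘ i.succAbove)) = Submodule.span R (Set.range v) := by
  refine le_antisymm (Submodule.span_mono (Set.range_comp_subset_range _ _))
    (Submodule.span_le.2 ?_)
  rintro _ ⟨j, rfl⟩
  obtain hj | ⟨j, rfl⟩ := Fin.eq_self_or_eq_succAbove i j
  · rw [hj]
    obtain ⟨u, hu⟩ := hi
    have hvi : v i = -∑ j, ((↑u⁻¹ : R) * a (i.succAbove j)) • v (i.succAbove j) := by
      rw [Fin.sum_univ_succAbove _ i, ← hu, add_eq_zero_iff_eq_neg] at ha
      simp_rw [mul_smul, ← Finset.smul_sum, ← smul_neg, ← ha, smul_smul, u.inv_mul, one_smul]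
    rw [hvi]
    exact neg_mem (Submodule.sum_mem _ fun j _ => Submodule.smul_mem _ _
      (Submodule.subset_span ⟨j, rfl⟩))
  · exact Submodule.subset_span ⟨j, rfl⟩

namespace LocalAlgebra

variable {F A : Type} [Field F] [Ring A] [Algebra F A]

local notation "𝔍" => Ideal.jacobson (⊥ : Ideal _)
local notation "𝔍²" => (Submodule.restrictScalars F 𝔍) ^ 2

section Jacobson

theorem exists_mul_add_one_eq_one_of_mem_jacobson {j : A} (hj : j ∈ 𝔍) : ∃ s, s * (j + 1) = 1 := by
  obtain ⟨s, hs⟩ := Ideal.exists_mul_add_sub_mem_of_mem_jacobson j hj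
  exact ⟨s, sub_eq_zero.1 (Ideal.mem_bot.1 hs)⟩

/-- The left inverse `s` of `j + 1` lies in `1 + J(A)`, so it has a left inverse too. -/
theorem isUnit_add_one_of_mem_jacobson {j : A} (hj : j ∈ 𝔍) : IsUnit (j + 1) := by
  obtain ⟨s, hs⟩ := exists_mul_add_one_eq_one_of_mem_jacobson hj
  have hs' : s - 1 ∈ 𝔍 := by
    have : s - 1 = -(s * j) := by
      rw [← hs]
      noncomm_ring
    rw [this]
    exact neg_mem (Ideal.mul_mem_left _ _ hj)
  obtain ⟨t, ht⟩ := exists_mul_add_one_eq_one_of_mem_jacobson hs'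
  rw [sub_add_cancel] at ht
  exact ⟨⟨j + 1, s, left_inv_eq_right_inv ht hs ▸ ht, hs⟩, rfl⟩

variable (hloc : ∀ a : A, ∃ c : F, a - algebraMap F A c ∈ 𝔍)
include hloc

theorem isUnit_of_notMem_jacobson {a : A} (ha : a ∉ 𝔍) : IsUnit a := by
  obtain ⟨c, hc⟩ := hloc a
  have hc0 : c ≠ 0 := by rintro rfl; simp_all
  have key : a = ((a - algebraMap F A c) * algebraMap F A c⁻¹ + 1) * algebraMap F A c := by
    rw [add_mul, mul_assoc, ← map_mul, inv_mul_cancel₀ hc0, map_one, mul_one, one_mul,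
      sub_add_cancel]
  rw [key]
  exact (isUnit_add_one_of_mem_jacobson (Ideal.mul_mem_right _ _ hc)).mul
    ((isUnit_iff_ne_zero.2 hc0).map _)

end Jacobson

theorem eq_zero_of_algebraMap_mem_jacobson [Nontrivial A] {c : F} (hc : algebraMap F A c ∈ 𝔍) :
    c = 0 := by
  by_contra hc0
  have := Ideal.eq_top_of_isUnit_mem _ hc ((isUnit_iff_ne_zero.2 hc0).map (algebraMap F A))
  exact bot_ne_top (Ideal.jacobson_eq_top_iff.1 this)

theorem mul_mem_jacobson_sq {a b : A} (ha : a ∈ 𝔍) (hb : b ∈ 𝔍) : a * b ∈ 𝔍² := by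
  rw [sq]
  exact Submodule.mul_mem_mul ha hb

theorem mul_mem_jacobson_sq_left (a : A) {w : A} (hw : w ∈ 𝔍²) : a * w ∈ 𝔍² := by
  rw [sq] at hw ⊢
  refine Submodule.mul_induction_on hw (fun m hm n hn => ?_) (fun p q hp hq => ?_)
  · rw [← mul_assoc]
    exact Submodule.mul_mem_mul (Ideal.mul_mem_left _ a hm) hn
  · rw [mul_add]
    exact add_mem hp hq

theorem mul_mem_jacobson_sq_right {w : A} (hw : w ∈ 𝔍²) (a : A) : w * a ∈ 𝔍² := by
  rw [sq] at hw ⊢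
  refine Submodule.mul_induction_on hw (fun m hm n hn => ?_) (fun p q hp hq => ?_)
  · rw [mul_assoc]
    exact Submodule.mul_mem_mul hm (Ideal.mul_mem_right a _ hn)
  · rw [add_mul]
    exact add_mem hp hq

section RadSMul

variable {M : Type} [AddCommGroup M] [Module A M]

theorem smul_mem_radSMul {r : A} (hr : r ∈ 𝔍) (m : M) : r • m ∈ radSMul A M :=
  Submodule.subset_span ⟨r, hr, m, rfl⟩

theorem mem_radSMul_pi_iff {κ : Type} [Fintype κ] {p : κ → A} :
    p ∈ radSMul A (κ → A) ↔ ∀ s, p s ∈ 𝔍 := by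
  classical
  refine ⟨fun hp => ?_, fun hp => ?_⟩
  · induction hp using Submodule.span_induction with
    | mem q hq =>
      obtain ⟨r, hr, q, rfl⟩ := hq
      exact fun s => Ideal.mul_mem_right _ _ hr
    | zero => exact fun _ => zero_mem _
    | add q q' _ _ h h' => exact fun s => add_mem (h s) (h' s)
    | smul a q _ h => exact fun s => Ideal.mul_mem_left _ a (h s)
  · rw [pi_eq_sum_univ p]
    exact Submodule.sum_mem _ fun s _ => smul_mem_radSMul (hp s) _

theorem apply_mem_jacobson_sq {κ : Type} {f : M →ₗ[A] (κ → A)} (hf : ∀ m s, f m s ∈ 𝔍)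
    {p : M} (hp : p ∈ radSMul A M) (s : κ) : f p s ∈ 𝔍² := by
  induction hp using Submodule.span_induction with
  | mem q hq =>
    obtain ⟨r, hr, q, rfl⟩ := hq
    simpa using mul_mem_jacobson_sq (F := F) hr (hf q s)
  | zero => simp
  | add q q' _ _ h h' => simpa using add_mem h h'
  | smul a q _ h => simpa using mul_mem_jacobson_sq_left a h

variable [Module F M] [IsScalarTower F A M]

theorem mk_smul_eq_smul_mk {a : A} {c : F} (hc : a - algebraMap F A c ∈ 𝔍) (m : M) :
    (Submodule.Quotient.mk (a • m) : M ⧸ radSMul A M) = c • Submodule.Quotient.mk m := by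
  rw [← Submodule.Quotient.mk_smul, ← sub_eq_zero, ← Submodule.Quotient.mk_sub,
    Submodule.Quotient.mk_eq_zero, ← algebraMap_smul A c m, ← sub_smul]
  exact smul_mem_radSMul hc m

variable (F A) in
def LinearIndependentModRad {ι : Type} (v : ι → M) : Prop :=
  LinearIndependent F fun t => (Submodule.Quotient.mk (v t) : M ⧸ radSMul A M)

theorem linearIndependentModRad_iff {ι : Type} [Fintype ι] {v : ι → M} :
    LinearIndependentModRad F A v ↔ ∀ g : ι → F, ∑ t, g t • v t ∈ radSMul A M → ∀ t, g t = 0 := by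
  simp_rw [LinearIndependentModRad, Fintype.linearIndependent_iff, ← Submodule.Quotient.mk_smul,
    ← Submodule.mkQ_apply, ← map_sum, Submodule.mkQ_apply, Submodule.Quotient.mk_eq_zero]

end RadSMul

section MinimalGenerators

variable {M : Type} [AddCommGroup M] [Module A M]

variable (A) in
structure MinimalGenerators (K : Submodule A M) where
  card : ℕ
  gen : Fin card → M
  span_eq : Submodule.span A (Set.range gen) = K
  ker_le : LinearMap.ker (Fintype.linearCombination A gen) ≤ radSMul A (Fin card → A)

variable (hloc : ∀ a : A, ∃ c : F, a - algebraMap F A c ∈ 𝔍)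
include hloc

theorem ker_linearCombination_le_radSMul {k : ℕ} {v : Fin k → M}
    (hmin : ∀ m < k, ∀ w : Fin m → M,
      Submodule.span A (Set.range w) ≠ Submodule.span A (Set.range v)) :
    LinearMap.ker (Fintype.linearCombination A v) ≤ radSMul A (Fin k → A) := by
  intro a ha
  rw [LinearMap.mem_ker, Fintype.linearCombination_apply] at ha
  refine mem_radSMul_pi_iff.2 fun i => ?_
  by_contra hi
  cases k with
  | zero => exact i.elim0
  | succ m =>
    exact hmin m m.lt_succ_self _
      (Submodule.span_range_comp_succAbove_eq ha (isUnit_of_notMem_jacobson hloc hi))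

theorem nonempty_minimalGenerators {K : Submodule A M} (hK : K.FG) :
    Nonempty (MinimalGenerators A K) := by
  classical
  have hex := Submodule.fg_iff_exists_fin_generating_family.1 hK
  obtain ⟨v, hv⟩ := Nat.find_spec hex
  refine ⟨⟨_, v, hv, ker_linearCombination_le_radSMul hloc fun m hm w hw => ?_⟩⟩
  exact Nat.find_min hex hm ⟨w, hw.trans hv⟩

end MinimalGenerators

section Augmentation

variable (A) in
def augmentation : (Fin 1 → A) →ₗ[A] A ⧸ Ideal.jacobson (⊥ : Ideal A) :=
  (Ideal.jacobson (⊥ : Ideal A)).mkQ ∘ₗ LinearMap.proj (R := A) (φ := fun _ : Fin 1 => A) 0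

theorem augmentation_surjective : Function.Surjective (augmentation A) := fun q =>
  ⟨fun _ => q.out, by simp [augmentation]⟩

theorem mem_ker_augmentation_iff {p : Fin 1 → A} :
    p ∈ LinearMap.ker (augmentation A) ↔ p 0 ∈ 𝔍 := by
  simp [augmentation, Ideal.Quotient.eq_zero_iff_mem]

end Augmentation

section Resolution

variable [IsNoetherianRing A] (hloc : ∀ a : A, ∃ c : F, a - algebraMap F A c ∈ 𝔍)

noncomputable def minimalGenerators {k : ℕ} (K : Submodule A (Fin k → A)) :
    MinimalGenerators A K :=
  (nonempty_minimalGenerators hloc (IsNoetherian.noetherian K)).some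

/-- `syzygy n = ⟨k, K⟩`: the `n`-th term of the resolution is `Aᵏ` and `K` is the kernel of the
map out of it. -/
noncomputable def syzygy : ℕ → Σ k : ℕ, Submodule A (Fin k → A)
  | 0 => ⟨1, LinearMap.ker (augmentation A)⟩
  | n + 1 => ⟨(minimalGenerators hloc (syzygy n).2).card,
      LinearMap.ker (Fintype.linearCombination A (minimalGenerators hloc (syzygy n).2).gen)⟩

noncomputable def differential (n : ℕ) :
    (Fin (syzygy hloc (n + 1)).1 → A) →ₗ[A] (Fin (syzygy hloc n).1 → A) :=
  Fintype.linearCombination A (minimalGenerators hloc (syzygy hloc n).2).gen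

theorem range_differential (n : ℕ) :
    LinearMap.range (differential hloc n) = (syzygy hloc n).2 :=
  (Fintype.range_linearCombination A _).trans (MinimalGenerators.span_eq _)

theorem syzygy_le_radSMul : ∀ n, (syzygy hloc n).2 ≤ radSMul A (Fin (syzygy hloc n).1 → A)
  | 0 => show LinearMap.ker (augmentation A) ≤ radSMul A (Fin 1 → A) from
      fun p hp => mem_radSMul_pi_iff.2 fun s => by
        rw [Subsingleton.elim s 0]
        exact mem_ker_augmentation_iff.1 hp
  | n + 1 => (minimalGenerators hloc (syzygy hloc n).2).ker_le

noncomputable def minimalResolution : MinProjRes A where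
  P n := Fin (syzygy hloc n).1 → A
  proj _ := inferInstance
  fg _ := inferInstance
  ε := augmentation A
  d := differential hloc
  surj := augmentation_surjective
  exact_zero := range_differential hloc 0
  exact n := range_differential hloc (n + 1)
  min_zero := syzygy_le_radSMul hloc 0
  minimal n := syzygy_le_radSMul hloc (n + 1)

end Resolution

section Matrix

open Matrix

variable {ι κ : Type} [Fintype ι] [Fintype κ]

theorem linearIndependent_map_row {res : A → F}
    (hres : ∀ a, a - algebraMap F A (res a) ∈ 𝔍) {V : Matrix ι κ A}
    (hV : LinearIndependentModRad F A V) : LinearIndependent F (V.map res).row := by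
  rw [Fintype.linearIndependent_iff]
  refine fun g hg => linearIndependentModRad_iff.1 hV g (mem_radSMul_pi_iff.2 fun s => ?_)
  have hs : ∑ t, g t * res (V t s) = 0 := by simpa using congrFun hg s
  have : (∑ t, g t • V t) s
      = ∑ t, algebraMap F A (g t) * (V t s - algebraMap F A (res (V t s))) := by
    simp [Finset.sum_apply, mul_sub, Algebra.smul_def, ← map_mul, Finset.sum_sub_distrib,
      ← map_sum, hs]
  rw [this]
  exact Submodule.sum_mem _ fun t _ => Ideal.mul_mem_left _ _ (hres _)

variable [DecidableEq ι] (hloc : ∀ a : A, ∃ c : F, a - algebraMap F A c ∈ 𝔍)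
include hloc

theorem exists_mul_sub_one_mem_jacobson_sq {V : Matrix ι κ A} (hV : LinearIndependentModRad F A V) :
    ∃ Y : Matrix κ ι A, ∀ t t', (V * Y - 1 : Matrix ι ι A) t t' ∈ 𝔍² := by
  choose res hres using hloc
  obtain ⟨U, hU⟩ := Matrix.exists_mul_eq_one_of_linearIndependent_row
    (linearIndependent_map_row hres hV)
  have hVU : V * U.map (algebraMap F A) - 1
      = (V - (V.map res).map (algebraMap F A)) * U.map (algebraMap F A) := by
    rw [Matrix.sub_mul, ← Matrix.map_mul, hU, Matrix.map_one _ (map_zero _) (map_one _)]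
  set Y₀ := U.map (algebraMap F A)
  set D := V * Y₀ - 1
  have hD : ∀ t t', D t t' ∈ 𝔍 := by
    intro t t'
    rw [hVU, Matrix.mul_apply]
    exact Submodule.sum_mem _ fun s _ => Ideal.mul_mem_right _ _ (hres _)
  -- `V * Y₀ = 1 + D` with `D` over `J(A)`, and `(1 + D) * (1 - D) = 1 - D * D`.
  refine ⟨Y₀ * (1 - D), fun t t' => ?_⟩
  have : V * (Y₀ * (1 - D)) - 1 = -(D * D) := by
    rw [← Matrix.mul_assoc, show V * Y₀ = D + 1 from (sub_add_cancel _ _).symm]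
    noncomm_ring
  rw [this, Matrix.neg_apply, Matrix.mul_apply]
  exact neg_mem (Submodule.sum_mem _ fun s _ => mul_mem_jacobson_sq (hD _ _) (hD _ _))

theorem mem_jacobson_sq_of_sum_smul_mem {w : ι → κ → A} (hw : LinearIndependentModRad F A w)
    {r : ι → A} (hr : ∀ s, (∑ t, r t • w t) s ∈ 𝔍²) (t : ι) : r t ∈ 𝔍² := by
  obtain ⟨Y, hY⟩ := exists_mul_sub_one_mem_jacobson_sq hloc (V := Matrix.of w) hw
  have : r = (r ᵥ* Matrix.of w) ᵥ* Y - r ᵥ* (Matrix.of w * Y - 1) := by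
    rw [Matrix.vecMul_sub, Matrix.vecMul_vecMul, Matrix.vecMul_one, sub_sub_cancel]
  rw [this, Pi.sub_apply, Matrix.vecMul, Matrix.vecMul, dotProduct, dotProduct]
  refine sub_mem (Submodule.sum_mem _ fun s _ => mul_mem_jacobson_sq_right ?_ _)
    (Submodule.sum_mem _ fun s _ => mul_mem_jacobson_sq_left _ (hY _ _))
  simpa [Matrix.vecMul_eq_sum] using hr s

end Matrix

section Families

variable (F) in
structure AnnihilatedFamily (x z : A) {ι ι' κ : Type} (K : Submodule A (κ → A))
    (w : ι ⊕ ι' → κ → A) : Prop where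
  linearIndependentModRad : LinearIndependentModRad F A w
  z_smul_mem : ∀ t, z • w t ∈ K
  x_smul_inl_mem : ∀ i, x • w (Sum.inl i) ∈ K

variable {x z : A}

theorem annihilatedFamily_ker_augmentation [Nontrivial A] (hx : x ∈ 𝔍) (hz : z ∈ 𝔍) :
    AnnihilatedFamily F x z (LinearMap.ker (augmentation A)) fun _ : Unit ⊕ Empty => 1 where
  linearIndependentModRad := linearIndependentModRad_iff.2 fun g hg => by
    rw [Fintype.sum_sum_type, mem_radSMul_pi_iff] at hg
    have : algebraMap F A (g (.inl ())) ∈ 𝔍 := by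
      simpa [Algebra.algebraMap_eq_smul_one] using hg 0
    rintro (⟨⟩ | ⟨⟨⟩⟩)
    exact eq_zero_of_algebraMap_mem_jacobson this
  z_smul_mem _ := mem_ker_augmentation_iff.2 (by simpa using hz)
  x_smul_inl_mem _ := mem_ker_augmentation_iff.2 (by simpa using hx)

variable (hloc : ∀ a : A, ∃ c : F, a - algebraMap F A c ∈ 𝔍)
  (hindep : ∀ c₁ c₂ : F, c₁ • x + c₂ • z ∈
    (Submodule.restrictScalars F (Ideal.jacobson (⊥ : Ideal A))) ^ 2 → c₁ = 0 ∧ c₂ = 0)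
  (hxz : x * z = 0) (hzx : z * x = 0) (hzz : z * z = 0)
include hloc hindep hxz hzx hzz

theorem AnnihilatedFamily.exists_lift {ι ι' κ κ' : Type} [Fintype ι] [Fintype ι'] [Fintype κ]
    {K : Submodule A (κ → A)} {d : (κ' → A) →ₗ[A] (κ → A)} (hK : K ≤ LinearMap.range d)
    (hd : LinearMap.range d ≤ radSMul A (κ → A)) {w : ι ⊕ ι' → κ → A}
    (hw : AnnihilatedFamily F x z K w) :
    ∃ w' : (ι ⊕ ι') ⊕ ι → κ' → A, AnnihilatedFamily F x z (LinearMap.ker d) w' := by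
  classical
  choose zlift hzlift using fun t => hK (hw.z_smul_mem t)
  choose xlift hxlift using fun i => hK (hw.x_smul_inl_mem i)
  refine ⟨Sum.elim zlift xlift, ⟨?_, ?_, fun t => ?_⟩⟩
  · refine linearIndependentModRad_iff.2 fun g hg => ?_
    have hdJ : ∀ p s, d p s ∈ 𝔍 := fun p => mem_radSMul_pi_iff.1 (hd ⟨p, rfl⟩)
    set r : ι ⊕ ι' → A := fun t => g (.inl t) • z + Sum.elim (fun i => g (.inr i) • x) 0 t
    have himage : d (∑ s, g s • Sum.elim zlift xlift s) = ∑ t, r t • w t := by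
      simp [r, map_sum, Fintype.sum_sum_type, add_smul, smul_assoc, hzlift, hxlift,
        Finset.sum_add_distrib, LinearMap.map_smul_of_tower]
    have hr := mem_jacobson_sq_of_sum_smul_mem hloc hw.linearIndependentModRad
      (himage ▸ apply_mem_jacobson_sq hdJ hg)
    have hinl : ∀ i, g (.inr i) = 0 ∧ g (.inl (.inl i)) = 0 := fun i =>
      hindep _ _ (by simpa [r, add_comm] using hr (.inl i))
    have hinr : ∀ j, g (.inl (.inr j)) = 0 := fun j =>
      (hindep 0 _ (by simpa [r] using hr (.inr j))).2
    rintro ((i | j) | i)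
    exacts [(hinl i).2, hinr j, (hinl i).1]
  · rintro (t | i) <;> simp [hzlift, hxlift, smul_smul, hzz, hzx]
  · simp [hzlift, smul_smul, hxz]

end Families

section Dimension

variable {M : Type} [AddCommGroup M] [Module A M] [Module F M] [IsScalarTower F A M]

theorem finrank_quotient_radSMul_le_fdim [Module.Finite F M] :
    finrank F (M ⧸ radSMul A M) ≤ fdim F A M := by
  have : fdim F A M = finrank F M := by
    rw [fdim]
    congr
    exact Module.ext' _ _ fun c m => algebraMap_smul A c m
  rw [this]
  exact LinearMap.finrank_le_finrank_of_surjective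
    (f := ((radSMul A M).mkQ : M →ₗ[A] M ⧸ radSMul A M).restrictScalars F)
    (Submodule.mkQ_surjective (radSMul A M))

theorem finrank_quotient_radSMul_le_card
    (hloc : ∀ a : A, ∃ c : F, a - algebraMap F A c ∈ 𝔍) (g : Finset M)
    (hg : Submodule.span A (g : Set M) = ⊤) :
    finrank F (M ⧸ radSMul A M) ≤ g.card := by
  classical
  set s : Finset (M ⧸ radSMul A M) := g.image Submodule.Quotient.mk
  have hspan : Submodule.span F (s : Set (M ⧸ radSMul A M)) = ⊤ := by
    rw [eq_top_iff]
    rintro q -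
    obtain ⟨p, rfl⟩ := Submodule.Quotient.mk_surjective _ q
    have hp : p ∈ Submodule.span A (g : Set M) := hg ▸ Submodule.mem_top
    induction hp using Submodule.span_induction with
    | mem p hp => exact Submodule.subset_span (Finset.mem_coe.2 (Finset.mem_image_of_mem _ hp))
    | zero => exact zero_mem _
    | add p q _ _ h h' => exact add_mem h h'
    | smul a p _ h =>
      obtain ⟨c, hc⟩ := hloc a
      rw [mk_smul_eq_smul_mk hc]
      exact Submodule.smul_mem _ c h
  calc finrank F (M ⧸ radSMul A M) = finrank F (Submodule.span F (s : Set (M ⧸ radSMul A M))) := by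
        rw [hspan, finrank_top]
    _ ≤ s.card := finrank_span_finset_le_card s
    _ ≤ g.card := Finset.card_image_le

end Dimension

section Counting

variable [IsNoetherianRing A] [Nontrivial A] {x z : A}
  (hloc : ∀ a : A, ∃ c : F, a - algebraMap F A c ∈ 𝔍) (hx : x ∈ 𝔍) (hz : z ∈ 𝔍)
  (hindep : ∀ c₁ c₂ : F, c₁ • x + c₂ • z ∈
    (Submodule.restrictScalars F (Ideal.jacobson (⊥ : Ideal A))) ^ 2 → c₁ = 0 ∧ c₂ = 0)
  (hxz : x * z = 0) (hzx : z * x = 0) (hzz : z * z = 0)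
include hloc hx hz hindep hxz hzx hzz

theorem exists_annihilatedFamily_syzygy (n : ℕ) :
    ∃ (ι ι' : Type) (_ : Fintype ι) (_ : Fintype ι') (w : ι ⊕ ι' → Fin (syzygy hloc n).1 → A),
      Fintype.card ι = Nat.fib (n + 1) ∧ Fintype.card (ι ⊕ ι') = Nat.fib (n + 2) ∧
        AnnihilatedFamily F x z (syzygy hloc n).2 w := by
  induction n with
  | zero => exact ⟨Unit, Empty, inferInstance, inferInstance, _, rfl, rfl,
      annihilatedFamily_ker_augmentation hx hz⟩
  | succ n ih =>
    obtain ⟨ι, ι', _, _, w, hι, hι', hw⟩ := ih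
    have hrange := range_differential hloc n
    obtain ⟨w', hw'⟩ := hw.exists_lift hloc hindep hxz hzx hzz hrange.ge
      (hrange.trans_le (syzygy_le_radSMul hloc n))
    refine ⟨ι ⊕ ι', ι, inferInstance, inferInstance, w', hι', ?_, hw'⟩
    rw [Fintype.card_sum, hι', hι, add_comm]
    exact Nat.fib_add_two.symm

theorem fib_le_finrank_quotient_radSMul [FiniteDimensional F A] (n : ℕ) :
    Nat.fib (n + 2) ≤
      finrank F ((Fin (syzygy hloc n).1 → A) ⧸ radSMul A (Fin (syzygy hloc n).1 → A)) := by
  obtain ⟨ι, ι', _, _, w, hι, hι', hw⟩ :=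
    exists_annihilatedFamily_syzygy hloc hx hz hindep hxz hzx hzz n
  exact hι' ▸ LinearIndependent.fintype_card_le_finrank hw.linearIndependentModRad

end Counting

end LocalAlgebra

open LocalAlgebra

/-- If A is a local F-algebra and x, z ∈ J(A) are linearly independent modulo J(A)²
with xz = zx = z² = 0, then there is a minimal projective resolution of the trivial
A-module in which `P i` needs at least `f i` generators, where `f` is the shifted
Fibonacci sequence (f i = fib (i+2)). In particular the trivial A-module has infinite
complexity. -/
theorem trivial_module_infinite_complexity
    (F A : Type) [Field F] [Ring A] [Algebra F A] [FiniteDimensional F A]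
    (hloc : ∀ a : A, ∃ c : F, a - algebraMap F A c ∈ Ideal.jacobson (⊥ : Ideal A))
    (x z : A)
    (hx : x ∈ Ideal.jacobson (⊥ : Ideal A)) (hz : z ∈ Ideal.jacobson (⊥ : Ideal A))
    (hindep : ∀ c₁ c₂ : F, c₁ • x + c₂ • z ∈
      (Submodule.restrictScalars F (Ideal.jacobson (⊥ : Ideal A))) ^ 2 → c₁ = 0 ∧ c₂ = 0)
    (hxz : x * z = 0) (hzx : z * x = 0) (hzz : z * z = 0) :
    ∃ R : MinProjRes A,
      (∀ i : ℕ, ∀ g : Finset (R.P i),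
          Submodule.span A (g : Set (R.P i)) = ⊤ → Nat.fib (i + 2) ≤ g.card) ∧
      ¬ ∃ c : ℕ, ∃ lam : ℝ, ∃ N : ℕ, ∀ n ≥ N,
          (fdim F A (R.P n) : ℝ) ≤ lam * (n : ℝ) ^ (c - 1) := by
  have : Nontrivial A := by
    refine not_subsingleton_iff_nontrivial.1 fun _ => one_ne_zero (hindep 1 0 ?_).1
    rw [Subsingleton.elim ((1 : F) • x + (0 : F) • z) 0]
    exact zero_mem _
  have : IsNoetherianRing A := isNoetherian_of_tower F inferInstance
  have hfib := fib_le_finrank_quotient_radSMul hloc hx hz hindep hxz hzx hzz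
  refine ⟨minimalResolution hloc, fun i g hg => (hfib i).trans
    (finrank_quotient_radSMul_le_card (M := Fin (syzygy hloc i).1 → A) hloc g hg), ?_⟩
  rintro ⟨c, lam, N, hN⟩
  obtain ⟨n, hlt, hn⟩ :=
    ((eventually_mul_pow_lt_pow Real.one_lt_goldenRatio (c - 1) lam).and
      (eventually_ge_atTop N)).exists
  have hdim : (Nat.fib (n + 2) : ℝ) ≤ fdim F A ((minimalResolution hloc).P n) := by
    exact_mod_cast (hfib n).trans
      (finrank_quotient_radSMul_le_fdim (M := Fin (syzygy hloc n).1 → A))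
  linarith [hN n hn, goldenRatio_pow_le_fib_add_two n]
end

section
/- Let A be a finite-dimensional symmetric F-algebra with symmetrizing form s, soc(A) one-dimensional over F, and set soc^2(A) = {a ∈ A : a·J(A)^2 = 0}. Then for any a ∈ soc^2(A) and b ∈ J(A), both ab and ba lie in soc(A), and ab = ba. -/
open Module

/-!
Since `a * J(A)^2 = 0`, the products `a * c` with `c ∈ J(A)` lie in the socle. In a symmetric
algebra the socle is also killed by `J(A)` from the left, which gives `b * a ∈ soc(A)`. Finally,
`soc(A)` is a one-dimensional right ideal, so for `x ∈ soc(A)` every `x * y` is a multiple of `x`;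
hence `s x = 0` forces `s (x * y) = 0` for all `y`, i.e. `x = 0`. Apply this to `x = ab - ba`,
which has `s x = 0` by symmetry of `s`.
-/

section Socle

variable {F A : Type*} [Field F] [Ring A] [Algebra F A]

theorem mul_mem_socl {x : A} (hx : x ∈ socl F A) (y : A) : x * y ∈ socl F A := fun c hc => by
  rw [mul_assoc]
  exact hx _ ((Ideal.jacobson ⊥).mul_mem_left y hc)

theorem mul_mem_socl_of_mul_sq_jrad_eq_zero {a : A} (ha : ∀ u ∈ jrad F A ^ 2, a * u = 0)
    {b : A} (hb : b ∈ jrad F A) : a * b ∈ socl F A := fun c hc => by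
  rw [mul_assoc]
  exact ha _ (by rw [sq]; exact Submodule.mul_mem_mul hb hc)

variable (s : A →ₗ[F] F) (hnd : ∀ a : A, (∀ b : A, s (a * b) = 0) → a = 0)
include hnd

theorem jrad_mul_socl (hs : ∀ a b : A, s (a * b) = s (b * a)) {b x : A} (hb : b ∈ jrad F A)
    (hx : x ∈ socl F A) : b * x = 0 :=
  hnd _ fun y => by
    rw [mul_assoc, hs, mul_assoc, hx _ ((Ideal.jacobson ⊥).mul_mem_left y hb), map_zero]

theorem eq_zero_of_mem_socl_of_apply_eq_zero (hsoc : finrank F (socl F A) = 1) {x : A}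
    (hx : x ∈ socl F A) (hsx : s x = 0) : x = 0 := by
  refine hnd x fun y => ?_
  rcases eq_or_ne x 0 with rfl | hx0
  · rw [zero_mul, map_zero]
  obtain ⟨c, hc⟩ := (finrank_eq_one_iff_of_nonzero' (⟨x, hx⟩ : socl F A)
    (by simpa using hx0)).mp hsoc ⟨x * y, mul_mem_socl hx y⟩
  have hxy : x * y = c • x := (congrArg Subtype.val hc).symm
  rw [hxy, map_smul, hsx, smul_zero]

end Socle

theorem soc2_mul_jacobson_general
    (F A : Type*) [Field F] [Ring A] [Algebra F A]
    (s : A →ₗ[F] F) (hs : ∀ a b : A, s (a * b) = s (b * a))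
    (hnd : ∀ a : A, (∀ b : A, s (a * b) = 0) → a = 0)
    (hsoc : finrank F (socl F A) = 1) :
    ∀ a : A, (∀ u ∈ jrad F A ^ 2, a * u = 0) →
      ∀ b ∈ jrad F A, a * b ∈ socl F A ∧ b * a ∈ socl F A ∧ a * b = b * a := by
  intro a ha b hb
  have hab : a * b ∈ socl F A := mul_mem_socl_of_mul_sq_jrad_eq_zero ha hb
  have hba : b * a ∈ socl F A := fun c hc => by
    rw [mul_assoc]
    exact jrad_mul_socl s hnd hs hb (mul_mem_socl_of_mul_sq_jrad_eq_zero ha hc)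
  refine ⟨hab, hba, sub_eq_zero.mp ?_⟩
  exact eq_zero_of_mem_socl_of_apply_eq_zero s hnd hsoc (sub_mem hab hba)
    (by rw [map_sub, hs, sub_self])

/-- If A is a finite-dimensional symmetric F-algebra with one-dimensional socle, then
for a ∈ soc²(A) and b ∈ J(A) we have ab, ba ∈ soc(A) and ab = ba. -/
theorem soc2_mul_jacobson
    (F A : Type*) [Field F] [Ring A] [Algebra F A] [FiniteDimensional F A]
    (s : A →ₗ[F] F) (hs : ∀ a b : A, s (a * b) = s (b * a))
    (hnd : ∀ a : A, (∀ b : A, s (a * b) = 0) → a = 0)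
    (hsoc : finrank F (socl F A) = 1) :
    ∀ a : A, (∀ u ∈ jrad F A ^ 2, a * u = 0) →
      ∀ b ∈ jrad F A, a * b ∈ socl F A ∧ b * a ∈ socl F A ∧ a * b = b * a :=
  soc2_mul_jacobson_general F A s hs hnd hsoc
end

section
/- Let F be a field of characteristic 2 and let Z = F[X,Y,Z_1,…,Z_4]/⟨X^2+1, Y^2+1, (X+1)Z_i, (Y+1)Z_i, Z_iZ_j (1 ≤ i,j ≤ 4)⟩. Then Z is a local commutative F-algebra of dimension 8 with J(Z)^3 = 0 and J(Z)^2 ≠ 0; that is, Z has Loewy length 3. -/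
/-!
In characteristic 2 the substitution `X ↦ X + 1`, `Y ↦ Y + 1` turns the relations into
monomials, since `(X + 1)² = X² + 1`: they become all monomials of degree two in the six
variables except `XY`. Modulo such a monomial ideal the remaining monomials
`1, X, Y, Z₁, …, Z₄, XY` form a basis, so `Z` has dimension 8. The image `𝔪` of the ideal of
variables is maximal, `𝔪³ = 0` because every monomial of degree three lies in the monomial
ideal, and `𝔪² ∋ XY ≠ 0`. A nilpotent maximal ideal is the only maximal ideal, hence it is
the Jacobson radical.
-/

open MvPolynomial Module

/-- The inclusion of the four variables Z₁,…,Z₄ among the six variables X,Y,Z₁,…,Z₄. -/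
def zvar (i : Fin 4) : Fin 6 := ⟨i.1 + 2, by omega⟩

/-- The relations X²+1, Y²+1, (X+1)Zᵢ, (Y+1)Zᵢ, ZᵢZⱼ (1 ≤ i,j ≤ 4). -/
noncomputable def relIdeal (F : Type*) [Field F] : Ideal (MvPolynomial (Fin 6) F) :=
  Ideal.span ({X 0 ^ 2 + 1, X 1 ^ 2 + 1} ∪
    {p | ∃ i : Fin 4, p = (X 0 + 1) * X (zvar i)} ∪
    {p | ∃ i : Fin 4, p = (X 1 + 1) * X (zvar i)} ∪
    {p | ∃ i j : Fin 4, p = X (zvar i) * X (zvar j)})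

/-- The algebra Z = F[X,Y,Z₁,…,Z₄]/⟨X²+1, Y²+1, (X+1)Zᵢ, (Y+1)Zᵢ, ZᵢZⱼ⟩. -/
def ZAlg (F : Type*) [Field F] : Type _ := MvPolynomial (Fin 6) F ⧸ relIdeal F

noncomputable instance (F : Type*) [Field F] : CommRing (ZAlg F) :=
  Ideal.Quotient.commRing _

noncomputable instance (F : Type*) [Field F] : Algebra F (ZAlg F) :=
  Ideal.Quotient.algebra F

open Finsupp

namespace Finsupp

variable {σ : Type*}

theorem eq_of_le_of_degree_le {m n : σ →₀ ℕ} (h : m ≤ n) (hd : degree n ≤ degree m) : m = n := by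
  obtain ⟨d, rfl⟩ := le_iff_exists_add.mp h
  rw [map_add] at hd
  rw [(degree_eq_zero_iff d).mp (by omega), add_zero]

theorem exists_eq_single_add_single {m : σ →₀ ℕ} (hm : degree m = 2) :
    ∃ i j, m = single i 1 + single j 1 := by
  obtain ⟨g, hgm, hg⟩ := exists_le_degree_eq m 1 (by omega)
  obtain ⟨d, rfl⟩ := le_iff_exists_add.mp hgm
  rw [map_add, hg] at hm
  obtain ⟨i, rfl⟩ : g ∈ Set.range (single · 1) := range_single_one.symm ▸ hg
  obtain ⟨j, rfl⟩ : d ∈ Set.range (single · 1) := range_single_one.symm ▸ (show degree d = 1 by omega)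
  exact ⟨i, j, rfl⟩

def twoLeDegreeExcept (a b : σ) : Set (σ →₀ ℕ) :=
  {m | 2 ≤ degree m} \ {single a 1 + single b 1}

variable {a b : σ}

theorem isUpperSet_twoLeDegreeExcept : IsUpperSet (twoLeDegreeExcept a b) := by
  rintro m n hmn ⟨hm, hne⟩
  refine ⟨hm.trans (degree_mono hmn), fun hn => hne ?_⟩
  rw [Set.mem_singleton_iff] at hn ⊢
  subst hn
  exact eq_of_le_of_degree_le hmn (by simpa using hm)

theorem single_add_single_mem_twoLeDegreeExcept {i j : σ}
    (h : single i 1 + single j 1 ≠ single a 1 + single b 1) :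
    single i 1 + single j 1 ∈ twoLeDegreeExcept a b :=
  ⟨by simp, h⟩

theorem exists_single_add_single_le (hab : a ≠ b) {m : σ →₀ ℕ} (hm : m ∈ twoLeDegreeExcept a b) :
    ∃ i j, single i 1 + single j 1 ∈ twoLeDegreeExcept a b ∧ single i 1 + single j 1 ≤ m := by
  obtain ⟨g, hgm, hg⟩ := exists_le_degree_eq m 2 hm.1
  obtain ⟨i, j, rfl⟩ := exists_eq_single_add_single hg
  by_cases hij : single i 1 + single j 1 = single a 1 + single b 1
  · -- `X a * X b * X k` divides `X^m` for some `k`, and so does `X k * X b` or `X a * X a`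
    rw [hij] at hgm
    obtain ⟨d, rfl⟩ := le_iff_exists_add.mp hgm
    obtain ⟨k, hk⟩ : d.support.Nonempty :=
      support_nonempty_iff.mpr fun hd => hm.2 (by simp [hd])
    have hkd : single k 1 ≤ d := by simpa [Nat.one_le_iff_ne_zero] using hk
    obtain rfl | hka := eq_or_ne k a
    · refine ⟨k, k, single_add_single_mem_twoLeDegreeExcept ?_, ?_⟩
      · simpa using (single_left_injective one_ne_zero).ne hab
      · calc single k 1 + single k 1 ≤ single k 1 + single b 1 + single k 1 :=
              (le_self_add (b := single b 1)).trans_eq (add_right_comm ..)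
          _ ≤ _ := add_le_add le_rfl hkd
    · refine ⟨k, b, single_add_single_mem_twoLeDegreeExcept ?_, ?_⟩
      · simpa using (single_left_injective one_ne_zero).ne hka
      · calc single k 1 + single b 1 ≤ single a 1 + single b 1 + single k 1 :=
              (le_self_add (b := single a 1)).trans_eq (by abel)
          _ ≤ _ := add_le_add le_rfl hkd
  · exact ⟨i, j, single_add_single_mem_twoLeDegreeExcept hij, hgm⟩

theorem compl_twoLeDegreeExcept :
    (twoLeDegreeExcept a b)ᶜ = insert (single a 1 + single b 1) {m | degree m < 2} := by
  ext m
  by_cases hm : m = single a 1 + single b 1 <;> simp [twoLeDegreeExcept, hm]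

theorem ncard_compl_twoLeDegreeExcept [Fintype σ] :
    (twoLeDegreeExcept a b)ᶜ.ncard = Fintype.card σ + 2 := by
  have hlt : {m : σ →₀ ℕ | degree m < 2} = insert 0 (Set.range (single · 1)) := by
    ext m
    rw [range_single_one]
    simp only [Set.mem_ofPred_eq, Set.mem_insert_iff, ← degree_eq_zero_iff]
    omega
  have hsingle : (0 : σ →₀ ℕ) ∉ Set.range (single · 1) := by
    rintro ⟨i, hi⟩
    simp at hi
  rw [compl_twoLeDegreeExcept, Set.ncard_insert_of_notMem (by simp) (finite_of_degree_lt 2), hlt,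
    Set.ncard_insert_of_notMem hsingle (Set.toFinite _),
    Set.ncard_range_of_injective (single_left_injective one_ne_zero), Nat.card_eq_fintype_card]

end Finsupp

theorem IsLocalRing.of_isMaximal_of_pow_eq_bot {A : Type*} [CommRing A] {m : Ideal A}
    [hm : m.IsMaximal] {n : ℕ} (h : m ^ n = ⊥) : IsLocalRing A :=
  of_unique_max_ideal ⟨m, hm, fun _ hM =>
    (hm.eq_of_le hM.ne_top (hM.isPrime.le_of_pow_le (h ▸ bot_le))).symm⟩

theorem Ideal.jacobson_bot_eq_of_isMaximal_of_pow_eq_bot {A : Type*} [CommRing A] {m : Ideal A}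
    [m.IsMaximal] {n : ℕ} (h : m ^ n = ⊥) : (⊥ : Ideal A).jacobson = m := by
  have := IsLocalRing.of_isMaximal_of_pow_eq_bot h
  rw [IsLocalRing.jacobson_eq_maximalIdeal ⊥ bot_ne_top]
  exact (IsLocalRing.eq_maximalIdeal ‹_›).symm

namespace MvPolynomial

variable {σ R K : Type*} [CommSemiring R] [Field K]

theorem isCompl_restrictSupport (s : Set (σ →₀ ℕ)) :
    IsCompl (restrictSupport R s) (restrictSupport R sᶜ) := by
  refine ⟨Submodule.disjoint_def.mpr fun p hs hsc => ?_, codisjoint_iff.mpr ?_⟩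
  · rw [mem_restrictSupport_iff] at hs hsc
    rw [← support_eq_empty, ← Finset.coe_eq_empty, ← Set.subset_empty_iff, ← Set.inter_compl_self s]
    exact Set.subset_inter hs hsc
  · rw [eq_top_iff, ← restrictSupport_univ, restrictSupport_eq_span, Submodule.span_le]
    rintro _ ⟨m, -, rfl⟩
    by_cases hm : m ∈ s
    · exact Submodule.mem_sup_left (by simp [hm])
    · exact Submodule.mem_sup_right (by simp [hm])

theorem finrank_quotient_restrictSupportIdeal {s : Set (σ →₀ ℕ)} (hs : IsUpperSet s) :
    finrank K (MvPolynomial σ K ⧸ restrictSupportIdeal K s hs) = sᶜ.ncard := by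
  rw [← (Submodule.Quotient.restrictScalarsEquiv K _).finrank_eq,
    ((restrictSupportIdeal K s hs).restrictScalars K).quotientEquivOfIsCompl _
      (isCompl_restrictSupport s) |>.finrank_eq,
    finrank_eq_nat_card_basis (basisRestrictSupport K sᶜ), Nat.card_coe_set_eq]

theorem ker_constantCoeff :
    RingHom.ker (constantCoeff : MvPolynomial σ R →+* R) = idealOfVars σ R := by
  ext p
  rw [← pow_one (idealOfVars σ R), mem_pow_idealOfVars_iff', RingHom.mem_ker]
  simp [degree_eq_zero_iff, constantCoeff_eq]

instance isMaximal_idealOfVars : (idealOfVars σ K).IsMaximal :=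
  ker_constantCoeff (R := K) ▸ RingHom.ker_isMaximal_of_surjective _
    fun r => ⟨C r, constantCoeff_C σ r⟩

variable {a b : σ}

noncomputable abbrev quadraticExceptIdeal (R : Type*) [CommSemiring R] (a b : σ) :
    Ideal (MvPolynomial σ R) :=
  restrictSupportIdeal R (twoLeDegreeExcept a b) isUpperSet_twoLeDegreeExcept

theorem X_mul_X_eq_monomial (i j : σ) :
    (X i * X j : MvPolynomial σ R) = monomial (single i 1 + single j 1) 1 := by
  simp [X, monomial_mul]

theorem X_mul_X_mem_quadraticExceptIdeal {i j : σ}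
    (hij : single i 1 + single j 1 ≠ single a 1 + single b 1) :
    (X i * X j : MvPolynomial σ R) ∈ quadraticExceptIdeal R a b := by
  rw [X_mul_X_eq_monomial]
  exact (monomial_mem_restrictSupport (R := R)).mpr
    (Or.inl (single_add_single_mem_twoLeDegreeExcept hij))

theorem quadraticExceptIdeal_eq_span (hab : a ≠ b) :
    quadraticExceptIdeal R a b = Ideal.span
      {p | ∃ i j, single i 1 + single j 1 ≠ single a 1 + single b 1 ∧ p = X i * X j} := by
  refine le_antisymm (fun p hp => ?_) (Ideal.span_le.mpr ?_)
  · rw [p.as_sum]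
    refine Ideal.sum_mem _ fun m hm => ?_
    obtain ⟨i, j, hij, hle⟩ := exists_single_add_single_le hab (hp hm)
    obtain ⟨d, rfl⟩ := le_iff_exists_add.mp hle
    rw [show monomial (single i 1 + single j 1 + d) (coeff _ p) =
        monomial d (coeff _ p) * (X i * X j) by
      rw [X_mul_X_eq_monomial, monomial_mul, mul_one, add_comm]]
    exact Ideal.mul_mem_left _ _ (Ideal.subset_span ⟨i, j, hij.2, rfl⟩)
  · rintro _ ⟨i, j, hij, rfl⟩
    exact X_mul_X_mem_quadraticExceptIdeal hij

theorem pow_three_idealOfVars_le_quadraticExceptIdeal :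
    idealOfVars σ R ^ 3 ≤ quadraticExceptIdeal R a b := fun p hp m hm =>
  have h3 := (mem_pow_idealOfVars_iff 3 p).mp hp m hm
  ⟨(by omega : 2 ≤ degree m), fun h => by simp [Set.mem_singleton_iff.mp h] at h3⟩

theorem X_mul_X_notMem_quadraticExceptIdeal [Nontrivial R] :
    (X a * X b : MvPolynomial σ R) ∉ quadraticExceptIdeal R a b := by
  rw [X_mul_X_eq_monomial]
  exact fun h => ((monomial_mem_restrictSupport (R := R)).mp h).elim (·.2 rfl) one_ne_zero

section Presentation

variable {A : Type*} [CommRing A] [Algebra K A] {π : MvPolynomial σ K →ₐ[K] A}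

theorem map_idealOfVars_pow_three (hker : RingHom.ker π = quadraticExceptIdeal K a b) :
    (idealOfVars σ K).map π ^ 3 = ⊥ := by
  rw [← Ideal.map_pow, eq_bot_iff, Ideal.map_le_iff_le_comap, ← RingHom.ker_eq_comap_bot, hker]
  exact pow_three_idealOfVars_le_quadraticExceptIdeal

theorem map_idealOfVars_sq_ne_bot (hker : RingHom.ker π = quadraticExceptIdeal K a b) :
    (idealOfVars σ K).map π ^ 2 ≠ ⊥ := by
  rw [← Ideal.map_pow]
  intro h
  have hXX : X a * X b ∈ idealOfVars σ K ^ 2 :=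
    pow_two (idealOfVars σ K) ▸ Ideal.mul_mem_mul (Ideal.subset_span ⟨a, rfl⟩)
      (Ideal.subset_span ⟨b, rfl⟩)
  have hπXX : π (X a * X b) = 0 := by
    rw [← Ideal.mem_bot, ← h]
    exact Ideal.mem_map_of_mem π hXX
  exact X_mul_X_notMem_quadraticExceptIdeal (hker ▸ RingHom.mem_ker.mpr hπXX)

theorem isMaximal_map_idealOfVars (hπ : Function.Surjective π)
    (hker : RingHom.ker π = quadraticExceptIdeal K a b) : ((idealOfVars σ K).map π).IsMaximal := by
  refine (Ideal.map_eq_top_or_isMaximal_of_surjective π hπ isMaximal_idealOfVars).resolve_left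
    fun htop => map_idealOfVars_sq_ne_bot hker ?_
  have h3 := map_idealOfVars_pow_three hker
  rw [htop, Ideal.top_pow] at h3 ⊢
  exact h3

theorem finrank_eq_card_add_two [Fintype σ] (hπ : Function.Surjective π)
    (hker : RingHom.ker π = quadraticExceptIdeal K a b) : finrank K A = Fintype.card σ + 2 := by
  rw [← (Ideal.quotientKerAlgEquivOfSurjective hπ).toLinearEquiv.finrank_eq,
    (Ideal.quotientEquivAlgOfEq K hker).toLinearEquiv.finrank_eq,
    finrank_quotient_restrictSupportIdeal, ncard_compl_twoLeDegreeExcept]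

end Presentation

noncomputable def translation {R : Type*} [CommRing R] (c : σ → R) :
    MvPolynomial σ R ≃ₐ[R] MvPolynomial σ R :=
  AlgEquiv.ofAlgHom (aeval fun i => X i + C (c i)) (aeval fun i => X i - C (c i))
    (by ext; simp) (by ext; simp)

theorem translation_X {R : Type*} [CommRing R] (c : σ → R) (i : σ) :
    translation c (X i) = X i + C (c i) :=
  aeval_X _ _

end MvPolynomial

namespace ZAlg

variable (F : Type*) [Field F]

def basePoint : Fin 6 → F := ![1, 1, 0, 0, 0, 0]

theorem fin_six_cases (i : Fin 6) : i = 0 ∨ i = 1 ∨ ∃ k, i = zvar k := by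
  fin_cases i <;> decide

@[simp] theorem zvar_ne_zero (k : Fin 4) : zvar k ≠ 0 := by fin_cases k <;> decide
@[simp] theorem zvar_ne_one (k : Fin 4) : zvar k ≠ 1 := by fin_cases k <;> decide

@[simp] theorem translation_X_zero : translation (basePoint F) (X 0) = X 0 + 1 := by
  simp [translation_X, basePoint]
@[simp] theorem translation_X_one : translation (basePoint F) (X 1) = X 1 + 1 := by
  simp [translation_X, basePoint]
@[simp] theorem translation_X_zvar (k : Fin 4) :
    translation (basePoint F) (X (zvar k)) = X (zvar k) := by
  fin_cases k <;> simp [translation_X, basePoint, zvar]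

variable {F}

theorem X_zero_sq_add_one_mem : (X 0 ^ 2 + 1 : MvPolynomial (Fin 6) F) ∈ relIdeal F :=
  Ideal.subset_span (.inl (.inl (.inl (.inl rfl))))

theorem X_one_sq_add_one_mem : (X 1 ^ 2 + 1 : MvPolynomial (Fin 6) F) ∈ relIdeal F :=
  Ideal.subset_span (.inl (.inl (.inl (.inr rfl))))

theorem X_zero_add_one_mul_X_zvar_mem (k : Fin 4) :
    ((X 0 + 1) * X (zvar k) : MvPolynomial (Fin 6) F) ∈ relIdeal F :=
  Ideal.subset_span (.inl (.inl (.inr ⟨k, rfl⟩)))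

theorem X_one_add_one_mul_X_zvar_mem (k : Fin 4) :
    ((X 1 + 1) * X (zvar k) : MvPolynomial (Fin 6) F) ∈ relIdeal F :=
  Ideal.subset_span (.inl (.inr ⟨k, rfl⟩))

theorem X_zvar_mul_X_zvar_mem (k l : Fin 4) :
    (X (zvar k) * X (zvar l) : MvPolynomial (Fin 6) F) ∈ relIdeal F :=
  Ideal.subset_span (.inr ⟨k, l, rfl⟩)

variable (F) in
noncomputable def presentation : MvPolynomial (Fin 6) F →ₐ[F] ZAlg F :=
  (Ideal.Quotient.mkₐ F (relIdeal F)).comp (translation (basePoint F)).toAlgHom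

variable (F) in
theorem presentation_surjective : Function.Surjective (presentation F) :=
  (Ideal.Quotient.mkₐ_surjective F _).comp (translation (basePoint F)).surjective

variable [CharP F 2]

theorem translation_X_mul_X_mem_relIdeal {i j : Fin 6}
    (hij : single i 1 + single j 1 ≠ single 0 1 + single 1 1) :
    translation (basePoint F) (X i * X j) ∈ relIdeal F := by
  rcases fin_six_cases i with rfl | rfl | ⟨k, rfl⟩ <;>
    rcases fin_six_cases j with rfl | rfl | ⟨l, rfl⟩ <;>
    simp only [map_mul, map_pow, translation_X_zero, translation_X_one, translation_X_zvar,
      ← pow_two, CharTwo.add_sq, one_pow]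
  · exact X_zero_sq_add_one_mem
  · exact absurd rfl hij
  · exact X_zero_add_one_mul_X_zvar_mem l
  · exact absurd (add_comm ..) hij
  · exact X_one_sq_add_one_mem
  · exact X_one_add_one_mul_X_zvar_mem l
  · exact mul_comm (X 0 + 1 : MvPolynomial (Fin 6) F) _ ▸ X_zero_add_one_mul_X_zvar_mem k
  · exact mul_comm (X 1 + 1 : MvPolynomial (Fin 6) F) _ ▸ X_one_add_one_mul_X_zvar_mem k
  · exact X_zvar_mul_X_zvar_mem k l

theorem relIdeal_eq_map_translation :
    relIdeal F = (quadraticExceptIdeal F (0 : Fin 6) 1).map (translation (basePoint F)) := by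
  have hmem : ∀ {i j : Fin 6}, ¬(i = 0 ∧ j = 1) → ¬(i = 1 ∧ j = 0) →
      translation (basePoint F) (X i * X j) ∈
        (quadraticExceptIdeal F (0 : Fin 6) 1).map (translation (basePoint F)) := fun h01 h10 =>
    Ideal.mem_map_of_mem _ <| X_mul_X_mem_quadraticExceptIdeal <| by
      rw [Ne, single_add_single_eq_single_add_single one_ne_zero one_ne_zero]
      omega
  refine le_antisymm (Ideal.span_le.mpr ?_) ?_
  · rintro p ((((rfl | rfl) | ⟨k, rfl⟩) | ⟨k, rfl⟩) | ⟨k, l, rfl⟩)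
    · simpa [← pow_two, CharTwo.add_sq] using hmem (i := 0) (j := 0) (by simp) (by simp)
    · simpa [← pow_two, CharTwo.add_sq] using hmem (i := 1) (j := 1) (by simp) (by simp)
    · simpa using hmem (i := 0) (j := zvar k) (by simp) (by simp)
    · simpa using hmem (i := 1) (j := zvar k) (by simp) (by simp)
    · simpa using hmem (i := zvar k) (j := zvar l) (by simp) (by simp)
  · rw [quadraticExceptIdeal_eq_span (by decide), Ideal.map_span, Ideal.span_le]
    rintro _ ⟨_, ⟨i, j, hij, rfl⟩, rfl⟩
    exact translation_X_mul_X_mem_relIdeal hij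

variable (F) in
theorem ker_presentation : RingHom.ker (presentation F) = quadraticExceptIdeal F 0 1 := by
  ext p
  change Ideal.Quotient.mk (relIdeal F) (translation (basePoint F) p) = 0 ↔ _
  rw [Ideal.Quotient.eq_zero_iff_mem, relIdeal_eq_map_translation, ← Ideal.mem_comap,
    Ideal.comap_map_of_bijective _ (translation _).bijective]

end ZAlg

/-- In characteristic 2, the algebra Z is local of dimension 8 with J(Z)³ = 0 and
J(Z)² ≠ 0; i.e. Z has Loewy length 3. -/
theorem ZAlg_local_dim_eight_loewy_three (F : Type*) [Field F] [CharP F 2] :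
    IsLocalRing (ZAlg F) ∧ finrank F (ZAlg F) = 8 ∧
      Ideal.jacobson (⊥ : Ideal (ZAlg F)) ^ 3 = ⊥ ∧
      Ideal.jacobson (⊥ : Ideal (ZAlg F)) ^ 2 ≠ ⊥ := by
  have hπ := ZAlg.presentation_surjective F
  have hker := ZAlg.ker_presentation F
  have := isMaximal_map_idealOfVars hπ hker
  have hcube := map_idealOfVars_pow_three hker
  rw [Ideal.jacobson_bot_eq_of_isMaximal_of_pow_eq_bot hcube]
  exact ⟨.of_isMaximal_of_pow_eq_bot hcube, finrank_eq_card_add_two hπ hker, hcube,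
    map_idealOfVars_sq_ne_bot hker⟩
end

section
/- Let F be a field of characteristic 2 and A a local F-algebra. Suppose x, y ∈ J(A) and α ∈ F∖{0} satisfy xy ≡ yx + αx^2 (mod J(A)^3) and y^2 ∈ J(A)^3. Then for every m ∈ ℕ: x^{m+1} ≡ (1/α)·(x·x^{m-1}y − x^{m-1}y·x) (mod J(A)^{m+2}) and x^{2m}y ≡ (1/α)·(y·x^{2m-1}y − x^{2m-1}y·y) (mod J(A)^{2m+2}). In particular, x^n ∈ [A,A] + J(A)^{n+1} for all n ≥ 2. -/
open Module

/-!
Write `δ := x y - y x - α x²`, which lies in `J³`. Moving `y` past `x` costs a multiple of `x²`,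
so by induction `y xⁿ ≡ xⁿ y - n α xⁿ⁺¹ (mod Jⁿ⁺²)`. The first congruence is just
`xᵏ⁺² - α⁻¹ (xᵏ⁺¹ y - xᵏ y x) = -α⁻¹ xᵏ δ`. For the second, multiplying the commutation rule
on the right by `y` gives `x²ᵐ y - α⁻¹ (y x²ᵐ⁻¹ y - x²ᵐ⁻¹ y y) ≡ 2m · x²ᵐ y`, which vanishes in
characteristic 2.
-/

section PowerCongruences

variable {F A : Type*} [Field F] [Ring A] [Algebra F A] {J : Submodule F A} {x y : A} {α : F}

theorem mul_pow_sub_pow_mul_add_smul_mem_pow (hx : x ∈ J)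
    (hxy : x * y - (y * x + α • x ^ 2) ∈ J ^ 3) (n : ℕ) :
    y * x ^ n - x ^ n * y + ((n : F) * α) • x ^ (n + 1) ∈ J ^ (n + 2) := by
  induction n with
  | zero => simp
  | succ n ih =>
    have h : y * x ^ (n + 1) - x ^ (n + 1) * y + (((n + 1 : ℕ) : F) * α) • x ^ (n + 1 + 1) =
        (y * x ^ n - x ^ n * y + ((n : F) * α) • x ^ (n + 1)) * x
          - x ^ n * (x * y - (y * x + α • x ^ 2)) := by
      rw [pow_succ _ (n + 1), pow_succ, pow_two]
      simp only [mul_sub, sub_mul, mul_add, add_mul, smul_mul_assoc, mul_smul_comm, mul_assoc,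
        Nat.cast_succ]
      module
    rw [h]
    refine sub_mem (Submodule.mul_mem_mul ih hx) ?_
    rw [show n + 1 + 2 = n + 3 by omega, pow_add]
    exact Submodule.mul_mem_mul (Submodule.pow_mem_pow _ hx n) hxy

theorem pow_sub_smul_commutator_mem_pow (hx : x ∈ J) (hα : α ≠ 0)
    (hxy : x * y - (y * x + α • x ^ 2) ∈ J ^ 3) (k : ℕ) :
    x ^ (k + 2) - α⁻¹ • (x * (x ^ k * y) - x ^ k * y * x) ∈ J ^ (k + 3) := by
  have h : x ^ (k + 2) - α⁻¹ • (x * (x ^ k * y) - x ^ k * y * x) =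
      -(α⁻¹ • (x ^ k * (x * y - (y * x + α • x ^ 2)))) := by
    rw [← mul_assoc x, ← pow_succ', pow_succ, pow_succ, pow_two]
    simp only [mul_sub, mul_add, mul_smul_comm, smul_sub, smul_add, smul_smul,
      inv_mul_cancel₀ hα, one_smul, mul_assoc]
    module
  rw [h, pow_add]
  exact neg_mem (Submodule.smul_mem _ _
    (Submodule.mul_mem_mul (Submodule.pow_mem_pow _ hx k) hxy))

theorem pow_mul_sub_smul_commutator_mem_pow (hx : x ∈ J) (hy : y ∈ J) (hα : α ≠ 0)
    (hxy : x * y - (y * x + α • x ^ 2) ∈ J ^ 3) {n : ℕ} (hn : ((n + 1 : ℕ) : F) = 0) :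
    x ^ (n + 1) * y - α⁻¹ • (y * (x ^ n * y) - x ^ n * y * y) ∈ J ^ (n + 3) := by
  have h : x ^ (n + 1) * y - α⁻¹ • (y * (x ^ n * y) - x ^ n * y * y) =
      ((n + 1 : ℕ) : F) • (x ^ (n + 1) * y)
        - α⁻¹ • ((y * x ^ n - x ^ n * y + ((n : F) * α) • x ^ (n + 1)) * y) := by
    simp only [← mul_assoc, sub_mul, add_mul, smul_mul_assoc]
    match_scalars <;> field_simp; ring
  rw [h, hn, zero_smul, zero_sub]
  exact neg_mem (Submodule.smul_mem _ _
    (Submodule.mul_mem_mul (mul_pow_sub_pow_mul_add_smul_mem_pow hx hxy n) hy))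

end PowerCongruences

theorem power_congruences_general
    (F A : Type*) [Field F] [Ring A] [Algebra F A] [CharP F 2]
    (x y : A) (hx : x ∈ jrad F A) (hy : y ∈ jrad F A)
    (α : F) (hα : α ≠ 0)
    (hxy : x * y - (y * x + α • x ^ 2) ∈ jrad F A ^ 3) :
    (∀ m : ℕ, 1 ≤ m →
      x ^ (m + 1) - α⁻¹ • (x * (x ^ (m - 1) * y) - (x ^ (m - 1) * y) * x) ∈ jrad F A ^ (m + 2) ∧
      x ^ (2 * m) * y - α⁻¹ • (y * (x ^ (2 * m - 1) * y) - (x ^ (2 * m - 1) * y) * y)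
        ∈ jrad F A ^ (2 * m + 2)) ∧
    (∀ n : ℕ, 2 ≤ n → x ^ n ∈ commSpan F A ⊔ jrad F A ^ (n + 1)) := by
  refine ⟨fun m hm => ?_, fun n hn => ?_⟩
  · obtain ⟨k, rfl⟩ : ∃ k, m = k + 1 := ⟨m - 1, by omega⟩
    refine ⟨by simpa using pow_sub_smul_commutator_mem_pow hx hα hxy k, ?_⟩
    have h_even : ((2 * k + 1 + 1 : ℕ) : F) = 0 := by
      rw [show 2 * k + 1 + 1 = 2 * (k + 1) by ring, Nat.cast_mul, CharP.cast_eq_zero, zero_mul]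
    rw [show 2 * (k + 1) - 1 = 2 * k + 1 by omega, show 2 * (k + 1) = 2 * k + 1 + 1 by ring]
    exact pow_mul_sub_smul_commutator_mem_pow hx hy hα hxy h_even
  · obtain ⟨k, rfl⟩ : ∃ k, n = k + 2 := ⟨n - 2, by omega⟩
    set c := x * (x ^ k * y) - x ^ k * y * x
    have hc : α⁻¹ • c ∈ commSpan F A :=
      Submodule.smul_mem _ _ (Submodule.subset_span ⟨x, x ^ k * y, rfl⟩)
    rw [← add_sub_cancel (α⁻¹ • c) (x ^ (k + 2))]
    exact Submodule.add_mem_sup hc (pow_sub_smul_commutator_mem_pow hx hα hxy k)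

/-- Congruences from Lemma 10 of the paper: powers of x are commutators modulo higher
radical powers. -/
theorem power_congruences
    (F A : Type*) [Field F] [Ring A] [Algebra F A] [FiniteDimensional F A] [CharP F 2]
    (hloc : ∀ a : A, ∃ c : F, a - algebraMap F A c ∈ Ideal.jacobson (⊥ : Ideal A))
    (x y : A) (hx : x ∈ jrad F A) (hy : y ∈ jrad F A)
    (α : F) (hα : α ≠ 0)
    (hxy : x * y - (y * x + α • x ^ 2) ∈ jrad F A ^ 3)
    (hy2 : y ^ 2 ∈ jrad F A ^ 3) :
    (∀ m : ℕ, 1 ≤ m →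
      x ^ (m + 1) - α⁻¹ • (x * (x ^ (m - 1) * y) - (x ^ (m - 1) * y) * x) ∈ jrad F A ^ (m + 2) ∧
      x ^ (2 * m) * y - α⁻¹ • (y * (x ^ (2 * m - 1) * y) - (x ^ (2 * m - 1) * y) * y)
        ∈ jrad F A ^ (2 * m + 2)) ∧
    (∀ n : ℕ, 2 ≤ n → x ^ n ∈ commSpan F A ⊔ jrad F A ^ (n + 1)) :=
  power_congruences_general F A x y hx hy α hα hxy
end
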